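/- arXiv:2405.15369 — 4 statements merged into one kernel-verified Lean document; each statement's English description precedes it below -/
import Mathlib

section
/- Telescoping lemma (simulation lemma): for two transition kernels P1 and P2 on the same finite state and action spaces (same reward, discount, and initial distribution) and any policy π, J[P1](π) − J[P2](π) = (γ/(1−γ)) · Σ_{(s,a)} ρ[P1,π](s,a) · Σ_{s'} ( P1(s,a)(s') − P2(s,a)(s') ) · V[P2,π](s'). -/
open Real

noncomputable section

variable {S A : Type*} [Fintype S] [Fintype A]

/-- Time-`t` state-action distribution `d_t[P,pol]` started from the initial state
distribution `ρ0`:  `d_0(s,a) = ρ0(s)·pol(s)(a)` and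
`d_{t+1}(s',a') = Σ_{(s,a)} d_t(s,a)·P(s,a)(s')·pol(s')(a')`. -/
def dDist (P : S → A → PMF S) (pol : S → PMF A) (ρ0 : PMF S) : ℕ → S × A → ℝ
  | 0 => fun p => (ρ0 p.1).toReal * (pol p.1 p.2).toReal
  | (t + 1) => fun p' =>
      ∑ p : S × A, dDist P pol ρ0 t p * (P p.1 p.2 p'.1).toReal * (pol p'.1 p'.2).toReal

/-- Normalized state-action occupancy `ρ[P,pol](s,a) = (1−γ)·Σ_t γ^t·d_t[P,pol](s,a)`. -/
def occ (P : S → A → PMF S) (pol : S → PMF A) (ρ0 : PMF S) (γ : ℝ) (p : S × A) : ℝ :=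
  (1 - γ) * ∑' t : ℕ, γ ^ t * dDist P pol ρ0 t p

/-- Normalized state occupancy `ν[P,pol](s) = Σ_a ρ[P,pol](s,a)`. -/
def stateOcc (P : S → A → PMF S) (pol : S → PMF A) (ρ0 : PMF S) (γ : ℝ) (s : S) : ℝ :=
  ∑ a : A, occ P pol ρ0 γ (s, a)

/-- Expected discounted return `J[P](pol) = Σ_t γ^t Σ_{(s,a)} d_t[P,pol](s,a)·r(s,a)`. -/
def Jret (P : S → A → PMF S) (pol : S → PMF A) (ρ0 : PMF S) (r : S → A → ℝ) (γ : ℝ) : ℝ :=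
  ∑' t : ℕ, γ ^ t * ∑ p : S × A, dDist P pol ρ0 t p * r p.1 p.2

/-- Value function `V[P,pol](s)`: the return with the recursion started from the point
distribution at `s` (i.e. `d_0(s',a) = 1[s'=s]·pol(s')(a)`). -/
def Vval (P : S → A → PMF S) (pol : S → PMF A) (r : S → A → ℝ) (γ : ℝ) (s : S) : ℝ :=
  Jret P pol (PMF.pure s) r γ

/-- Action-value function `Q[P,pol](s,a) = r(s,a) + γ·Σ_{s'} P(s,a)(s')·V[P,pol](s')`. -/
def Qval (P : S → A → PMF S) (pol : S → PMF A) (r : S → A → ℝ) (γ : ℝ) (s : S) (a : A) : ℝ :=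
  r s a + γ * ∑ s' : S, (P s a s').toReal * Vval P pol r γ s'

/-- Total variation distance between two pmfs on a finite type:
`D_TV(p,q) = (1/2)·Σ_x |p(x) − q(x)|`. -/
def dTV {X : Type*} [Fintype X] (p q : PMF X) : ℝ :=
  (1 / 2) * ∑ x : X, |(p x).toReal - (q x).toReal|

/-- Kullback–Leibler divergence between two pmfs on a finite type (with `q` everywhere
positive): `D_KL(p‖q) = Σ_x p(x)·log(p(x)/q(x))`, with the convention `0·log 0 = 0`. -/
def dKL {X : Type*} [Fintype X] (p q : PMF X) : ℝ :=
  ∑ x : X, (p x).toReal * Real.log ((p x).toReal / (q x).toReal)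

/-- Shannon entropy of a pmf on a finite type, `H(p) = −Σ_x p(x)·log p(x)`,
with the convention `0·log 0 = 0`. -/
def entropyPMF {X : Type*} [Fintype X] (p : PMF X) : ℝ :=
  - ∑ x : X, (p x).toReal * Real.log (p x).toReal

end

/-!
Write `ρ₁ = occ P1`, `V = Vval P2` and `(Pf)(s,a) = Σ_{s'} P(s,a)(s') f(s')`. Pairing the flow
equation `ν₁(s') = (1-γ) ρ0(s') + γ Σ_{(s,a)} ρ₁(s,a) P1(s,a)(s')` of the occupancy measure with `V`
gives `Σ ρ₁ V = (1-γ) Σ ρ0 V + γ Σ ρ₁ (P1 V) = (1-γ) J[P2] + γ Σ ρ₁ (P1 V)`. On the other hand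
`ρ₁(s,a)` is proportional to `pol(s)(a)`, so the Bellman equation `V(s) = Σ_a pol(s)(a) Q(s,a)`
gives `Σ ρ₁ V = Σ ρ₁ Q = Σ ρ₁ r + γ Σ ρ₁ (P2 V) = (1-γ) J[P1] + γ Σ ρ₁ (P2 V)`.
Subtracting the two expressions proves the lemma.
-/

theorem PMF.sum_toReal_eq_one {X : Type*} [Fintype X] (p : PMF X) : ∑ x, (p x).toReal = 1 := by
  rw [← ENNReal.toReal_sum fun x _ => p.apply_ne_top x, ← tsum_fintype (L := .unconditional X),
    p.tsum_coe, ENNReal.toReal_one]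

theorem PMF.toReal_bind_apply {X Y : Type*} [Fintype X] (p : PMF X) (f : X → PMF Y) (y : Y) :
    (p.bind f y).toReal = ∑ x, (p x).toReal * (f x y).toReal := by
  rw [PMF.bind_apply, tsum_fintype,
    ENNReal.toReal_sum fun x _ => ENNReal.mul_ne_top (p.apply_ne_top x) ((f x).apply_ne_top y)]
  simp only [ENNReal.toReal_mul]

theorem PMF.sum_toReal_pure_mul {X : Type*} [Fintype X] (x : X) (f : X → ℝ) :
    ∑ y, ((PMF.pure x) y).toReal * f y = f x := by
  rw [Finset.sum_eq_single_of_mem x (Finset.mem_univ x) fun y _ hy => by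
    rw [PMF.pure_apply_of_ne x y hy, ENNReal.toReal_zero, zero_mul]]
  rw [PMF.pure_apply_self x, ENNReal.toReal_one, one_mul]

section

variable {S A : Type*} [Fintype S] [Fintype A] (P : S → A → PMF S) (pol : S → PMF A)

noncomputable def stepDist (ρ : PMF S) : PMF S :=
  ρ.bind fun s => (pol s).bind (P s)

theorem sum_dDist_zero_mul (ρ : PMF S) (h : S → A → ℝ) :
    ∑ p : S × A, dDist P pol ρ 0 p * h p.1 p.2 =
      ∑ s, (ρ s).toReal * ∑ a, (pol s a).toReal * h s a := by
  simp only [dDist, Fintype.sum_prod_type, Finset.mul_sum, mul_assoc]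

theorem toReal_stepDist_apply (ρ : PMF S) (s' : S) :
    (stepDist P pol ρ s').toReal = ∑ p : S × A, dDist P pol ρ 0 p * (P p.1 p.2 s').toReal := by
  rw [sum_dDist_zero_mul P pol ρ fun s a => (P s a s').toReal]
  simp only [stepDist, PMF.toReal_bind_apply]

/- `dDist` is defined by splitting off the last transition; this splits off the first one,
which is what first-step (Bellman) arguments need. -/
theorem dDist_succ_eq_dDist_stepDist : ∀ (t : ℕ) (ρ : PMF S),
    dDist P pol ρ (t + 1) = dDist P pol (stepDist P pol ρ) t
  | 0, ρ => by
    funext p'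
    simp only [dDist, toReal_stepDist_apply, Finset.sum_mul]
  | t + 1, ρ => by
    funext p'
    rw [dDist, dDist_succ_eq_dDist_stepDist t ρ]
    rfl

theorem dDist_nonneg : ∀ (t : ℕ) (ρ : PMF S) (p : S × A), 0 ≤ dDist P pol ρ t p
  | 0, _, _ => by dsimp only [dDist]; positivity
  | t + 1, ρ, p => by
    rw [dDist_succ_eq_dDist_stepDist]; exact dDist_nonneg t _ p

theorem sum_dDist_eq_one : ∀ (t : ℕ) (ρ : PMF S), ∑ p : S × A, dDist P pol ρ t p = 1
  | 0, ρ => by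
    simpa only [mul_one, PMF.sum_toReal_eq_one] using sum_dDist_zero_mul P pol ρ fun _ _ => 1
  | t + 1, ρ => by
    rw [dDist_succ_eq_dDist_stepDist]; exact sum_dDist_eq_one t _

theorem dDist_le_one (t : ℕ) (ρ : PMF S) (p : S × A) : dDist P pol ρ t p ≤ 1 :=
  sum_dDist_eq_one P pol t ρ ▸
    Finset.single_le_sum (fun q _ => dDist_nonneg P pol t ρ q) (Finset.mem_univ p)

theorem sum_dDist_succ_mul_fst (t : ℕ) (ρ : PMF S) (g : S → ℝ) :
    ∑ p : S × A, dDist P pol ρ (t + 1) p * g p.1 =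
      ∑ p : S × A, dDist P pol ρ t p * ∑ s', (P p.1 p.2 s').toReal * g s' := by
  simp only [dDist, Finset.sum_mul, Finset.mul_sum]
  rw [Finset.sum_comm]
  refine Finset.sum_congr rfl fun p _ => ?_
  rw [Fintype.sum_prod_type]
  refine Finset.sum_congr rfl fun s' _ => ?_
  dsimp only
  rw [← Finset.sum_mul, ← Finset.mul_sum, PMF.sum_toReal_eq_one]
  ring

theorem sum_dDist_mul_policy_average : ∀ (t : ℕ) (ρ : PMF S) (h : S → A → ℝ),
    ∑ p : S × A, dDist P pol ρ t p * h p.1 p.2 =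
      ∑ p : S × A, dDist P pol ρ t p * ∑ a, (pol p.1 a).toReal * h p.1 a
  | 0, ρ, h => by
    rw [sum_dDist_zero_mul, sum_dDist_zero_mul P pol ρ fun s _ => ∑ a, (pol s a).toReal * h s a]
    simp only [← Finset.sum_mul, PMF.sum_toReal_eq_one, one_mul]
  | t + 1, ρ, h => by
    rw [dDist_succ_eq_dDist_stepDist]; exact sum_dDist_mul_policy_average t _ h

theorem dDist_eq_sum_pure : ∀ (t : ℕ) (ρ : PMF S) (p : S × A),
    dDist P pol ρ t p = ∑ s, (ρ s).toReal * dDist P pol (PMF.pure s) t p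
  | 0, ρ, p => by
    simp only [dDist, PMF.pure_apply, apply_ite ENNReal.toReal, ENNReal.toReal_one,
      ENNReal.toReal_zero, ite_mul, one_mul, zero_mul, mul_ite, mul_zero]
    rw [Finset.sum_eq_single_of_mem p.1 (Finset.mem_univ _) fun s _ hs => if_neg hs.symm,
      if_pos rfl]
  | t + 1, ρ, p => by
    simp only [dDist, dDist_eq_sum_pure t ρ, Finset.sum_mul, Finset.mul_sum]
    rw [Finset.sum_comm]
    exact Finset.sum_congr rfl fun s _ => Finset.sum_congr rfl fun q _ => by ring

variable {γ : ℝ}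

theorem summable_pow_mul_dDist (hγ0 : 0 ≤ γ) (hγ1 : γ < 1) (ρ : PMF S) (p : S × A) :
    Summable fun t => γ ^ t * dDist P pol ρ t p :=
  (summable_geometric_of_lt_one hγ0 hγ1).of_nonneg_of_le
    (fun t => mul_nonneg (pow_nonneg hγ0 t) (dDist_nonneg P pol t ρ p))
    (fun t => mul_le_of_le_one_right (pow_nonneg hγ0 t) (dDist_le_one P pol t ρ p))

theorem summable_pow_mul_sum_dDist_mul (hγ0 : 0 ≤ γ) (hγ1 : γ < 1) (ρ : PMF S)
    (r : S → A → ℝ) : Summable fun t => γ ^ t * ∑ p : S × A, dDist P pol ρ t p * r p.1 p.2 := by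
  simp only [Finset.mul_sum, ← mul_assoc]
  exact summable_sum fun p _ => (summable_pow_mul_dDist P pol hγ0 hγ1 ρ p).mul_right _

theorem sum_occ_mul_eq_mul_Jret (hγ0 : 0 ≤ γ) (hγ1 : γ < 1) (ρ : PMF S) (r : S → A → ℝ) :
    ∑ p : S × A, occ P pol ρ γ p * r p.1 p.2 = (1 - γ) * Jret P pol ρ r γ := by
  simp only [Jret, Finset.mul_sum, ← mul_assoc]
  rw [Summable.tsum_finsetSum fun p _ => (summable_pow_mul_dDist P pol hγ0 hγ1 ρ p).mul_right _,
    Finset.mul_sum]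
  refine Finset.sum_congr rfl fun p _ => ?_
  rw [occ, tsum_mul_right]
  ring

theorem Jret_eq_add_tsum_succ (hγ0 : 0 ≤ γ) (hγ1 : γ < 1) (ρ : PMF S) (r : S → A → ℝ) :
    Jret P pol ρ r γ = ∑ p : S × A, dDist P pol ρ 0 p * r p.1 p.2 +
      γ * ∑' t, γ ^ t * ∑ p : S × A, dDist P pol ρ (t + 1) p * r p.1 p.2 := by
  rw [Jret, (summable_pow_mul_sum_dDist_mul P pol hγ0 hγ1 ρ r).tsum_eq_zero_add,
    ← tsum_mul_left]
  simp only [pow_zero, one_mul, pow_succ', mul_assoc]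

theorem Jret_eq_add_Jret_stepDist (hγ0 : 0 ≤ γ) (hγ1 : γ < 1) (ρ : PMF S) (r : S → A → ℝ) :
    Jret P pol ρ r γ = ∑ p : S × A, dDist P pol ρ 0 p * r p.1 p.2 +
      γ * Jret P pol (stepDist P pol ρ) r γ := by
  rw [Jret_eq_add_tsum_succ P pol hγ0 hγ1]
  simp only [dDist_succ_eq_dDist_stepDist]
  rfl

theorem Jret_eq_sum_Vval (hγ0 : 0 ≤ γ) (hγ1 : γ < 1) (ρ : PMF S) (r : S → A → ℝ) :
    Jret P pol ρ r γ = ∑ s, (ρ s).toReal * Vval P pol r γ s := by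
  have h : ∀ t, γ ^ t * ∑ p : S × A, dDist P pol ρ t p * r p.1 p.2 =
      ∑ s, (ρ s).toReal * (γ ^ t * ∑ p : S × A, dDist P pol (PMF.pure s) t p * r p.1 p.2) := by
    intro t
    simp only [dDist_eq_sum_pure P pol t ρ, Finset.sum_mul, Finset.mul_sum]
    rw [Finset.sum_comm]
    exact Finset.sum_congr rfl fun s _ => Finset.sum_congr rfl fun p _ => by ring
  rw [Jret, tsum_congr h, Summable.tsum_finsetSum fun s _ =>
    (summable_pow_mul_sum_dDist_mul P pol hγ0 hγ1 _ r).mul_left _]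
  simp only [tsum_mul_left, Vval, Jret]

theorem Vval_eq_sum_Qval (hγ0 : 0 ≤ γ) (hγ1 : γ < 1) (r : S → A → ℝ) (s : S) :
    Vval P pol r γ s = ∑ a, (pol s a).toReal * Qval P pol r γ s a := by
  rw [Vval, Jret_eq_add_Jret_stepDist P pol hγ0 hγ1, Jret_eq_sum_Vval P pol hγ0 hγ1,
    sum_dDist_zero_mul, PMF.sum_toReal_pure_mul, stepDist, PMF.pure_bind]
  simp only [PMF.toReal_bind_apply, Qval, mul_add, Finset.sum_add_distrib, Finset.sum_mul,
    Finset.mul_sum]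
  rw [Finset.sum_comm]
  exact congrArg _ <| Finset.sum_congr rfl fun a _ => Finset.sum_congr rfl fun s' _ => by ring

theorem sum_occ_mul_policy_average (hγ0 : 0 ≤ γ) (hγ1 : γ < 1) (ρ : PMF S)
    (h : S → A → ℝ) :
    ∑ p : S × A, occ P pol ρ γ p * h p.1 p.2 =
      ∑ p : S × A, occ P pol ρ γ p * ∑ a, (pol p.1 a).toReal * h p.1 a := by
  rw [sum_occ_mul_eq_mul_Jret P pol hγ0 hγ1 ρ h,
    sum_occ_mul_eq_mul_Jret P pol hγ0 hγ1 ρ fun s _ => ∑ a, (pol s a).toReal * h s a, Jret, Jret]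
  simp only [sum_dDist_mul_policy_average P pol _ ρ h]

theorem sum_occ_mul_fst (hγ0 : 0 ≤ γ) (hγ1 : γ < 1) (ρ : PMF S) (g : S → ℝ) :
    ∑ p : S × A, occ P pol ρ γ p * g p.1 =
      (1 - γ) * ∑ s, (ρ s).toReal * g s +
        γ * ∑ p : S × A, occ P pol ρ γ p * ∑ s', (P p.1 p.2 s').toReal * g s' := by
  have hJ : Jret P pol ρ (fun s _ => g s) γ = ∑ s, (ρ s).toReal * g s +
      γ * Jret P pol ρ (fun s a => ∑ s', (P s a s').toReal * g s') γ := by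
    rw [Jret_eq_add_tsum_succ P pol hγ0 hγ1, sum_dDist_zero_mul P pol ρ fun s _ => g s]
    simp only [← Finset.sum_mul, PMF.sum_toReal_eq_one, one_mul, sum_dDist_succ_mul_fst]
    rfl
  rw [sum_occ_mul_eq_mul_Jret P pol hγ0 hγ1 ρ fun s _ => g s,
    sum_occ_mul_eq_mul_Jret P pol hγ0 hγ1 ρ fun s a => ∑ s', (P s a s').toReal * g s', hJ]
  ring

end

theorem telescoping_lemma_general
    {S A : Type*} [Fintype S] [Fintype A]
    (P1 P2 : S → A → PMF S) (pol : S → PMF A) (ρ0 : PMF S)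
    (r : S → A → ℝ)
    (γ : ℝ) (hγ0 : 0 ≤ γ) (hγ1 : γ < 1) :
    Jret P1 pol ρ0 r γ - Jret P2 pol ρ0 r γ =
      (γ / (1 - γ)) * ∑ p : S × A, occ P1 pol ρ0 γ p *
        ∑ s' : S, ((P1 p.1 p.2 s').toReal - (P2 p.1 p.2 s').toReal) * Vval P2 pol r γ s' := by
  have hReward := sum_occ_mul_eq_mul_Jret P1 pol hγ0 hγ1 ρ0 r
  have hFlow := sum_occ_mul_fst P1 pol hγ0 hγ1 ρ0 (Vval P2 pol r γ)
  rw [← Jret_eq_sum_Vval P2 pol hγ0 hγ1] at hFlow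
  have hBellman : ∑ p : S × A, occ P1 pol ρ0 γ p * Vval P2 pol r γ p.1 =
      ∑ p : S × A, occ P1 pol ρ0 γ p * r p.1 p.2 +
        γ * ∑ p : S × A, occ P1 pol ρ0 γ p * ∑ s', (P2 p.1 p.2 s').toReal * Vval P2 pol r γ s' :=
    calc _ = ∑ p : S × A, occ P1 pol ρ0 γ p * Qval P2 pol r γ p.1 p.2 := by
          rw [sum_occ_mul_policy_average P1 pol hγ0 hγ1 ρ0 (Qval P2 pol r γ)]
          simp only [← Vval_eq_sum_Qval P2 pol hγ0 hγ1 r]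
      _ = _ := by
          rw [Finset.mul_sum, ← Finset.sum_add_distrib]
          exact Finset.sum_congr rfl fun p _ => by rw [Qval]; ring
  rw [div_mul_eq_mul_div, eq_div_iff (sub_ne_zero.mpr hγ1.ne')]
  simp only [sub_mul, Finset.sum_sub_distrib, mul_sub]
  linear_combination hFlow - hBellman - hReward

/-- telescoping / simulation lemma: for two transition kernels `P1,P2`
and any policy `pol`,
`J[P1](pol) − J[P2](pol) = (γ/(1−γ)) Σ_{(s,a)} ρ[P1,pol](s,a) Σ_{s'} (P1(s,a)(s') − P2(s,a)(s'))·V[P2,pol](s')`. -/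
theorem telescoping_lemma
    {S A : Type*} [Fintype S] [Fintype A] [Nonempty S] [Nonempty A]
    (P1 P2 : S → A → PMF S) (pol : S → PMF A) (ρ0 : PMF S)
    (r : S → A → ℝ) (rmax : ℝ) (hrmax : 0 ≤ rmax) (hr : ∀ s a, |r s a| ≤ rmax)
    (γ : ℝ) (hγ0 : 0 ≤ γ) (hγ1 : γ < 1) :
    Jret P1 pol ρ0 r γ - Jret P2 pol ρ0 r γ =
      (γ / (1 - γ)) * ∑ p : S × A, occ P1 pol ρ0 γ p *
        ∑ s' : S, ((P1 p.1 p.2 s').toReal - (P2 p.1 p.2 s').toReal) * Vval P2 pol r γ s' :=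
  telescoping_lemma_general P1 P2 pol ρ0 r γ hγ0 hγ1
end

section
/- Extended telescoping lemma (corrected form): for two transition kernels P1, P2 and two policies π1, π2 on the same finite state and action spaces (same reward, discount, and initial distribution), J[P1](π1) − J[P2](π2) = (1/(1−γ)) · Σ_s ν[P1,π1](s) · Σ_a ( π1(s)(a) − π2(s)(a) ) · Q[P2,π2](s,a) + (γ/(1−γ)) · Σ_{(s,a)} ρ[P1,π1](s,a) · Σ_{s'} ( P1(s,a)(s') − P2(s,a)(s') ) · V[P2,π2](s'). -/
open Real

noncomputable section TelescopeAux

variable {S A : Type*} [Fintype S] [Fintype A]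

def dD (P : S → A → PMF S) (pol : S → PMF A) (μ : S → ℝ) : ℕ → S × A → ℝ
  | 0 => fun p => μ p.1 * (pol p.1 p.2).toReal
  | (t + 1) => fun p' =>
      ∑ p : S × A, dD P pol μ t p * (P p.1 p.2 p'.1).toReal * (pol p'.1 p'.2).toReal

lemma pmf_sum_one {X : Type*} [Fintype X] (p : PMF X) : ∑ x : X, (p x).toReal = 1 := by
  have h := p.tsum_coe
  rw [tsum_fintype] at h
  rw [← ENNReal.toReal_sum (fun x _ => p.apply_ne_top x), h, ENNReal.toReal_one]

variable (P : S → A → PMF S) (pol : S → PMF A) (ρ0 : PMF S) (μ : S → ℝ)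

lemma dDist_eq (t : ℕ) : dDist P pol ρ0 t = dD P pol (fun s => (ρ0 s).toReal) t := by
  induction t with
  | zero => rfl
  | succ t ih => funext p'; simp [dDist, dD, ih]

lemma dD_nonneg (hμ : ∀ s, 0 ≤ μ s) (t : ℕ) (p : S × A) : 0 ≤ dD P pol μ t p := by
  induction t generalizing p with
  | zero => exact mul_nonneg (hμ _) ENNReal.toReal_nonneg
  | succ t ih =>
      exact Finset.sum_nonneg fun q _ =>
        mul_nonneg (mul_nonneg (ih q) ENNReal.toReal_nonneg) ENNReal.toReal_nonneg

lemma dD_mass (t : ℕ) : ∑ p : S × A, dD P pol μ t p = ∑ s : S, μ s := by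
  induction t with
  | zero =>
      rw [Fintype.sum_prod_type]
      simp only [dD]
      refine Finset.sum_congr rfl fun s _ => ?_
      rw [← Finset.mul_sum, pmf_sum_one, mul_one]
  | succ t ih =>
      rw [← ih]
      simp only [dD]
      calc ∑ p' : S × A, ∑ p : S × A,
              dD P pol μ t p * (P p.1 p.2 p'.1).toReal * (pol p'.1 p'.2).toReal
          = ∑ p : S × A, ∑ p' : S × A,
              dD P pol μ t p * (P p.1 p.2 p'.1).toReal * (pol p'.1 p'.2).toReal :=
            Finset.sum_comm
        _ = ∑ p : S × A, dD P pol μ t p := by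
            refine Finset.sum_congr rfl fun p _ => ?_
            rw [Fintype.sum_prod_type]
            have h1 : ∀ s' : S,
                ∑ a' : A, dD P pol μ t p * (P p.1 p.2 s').toReal * (pol s' a').toReal
                = dD P pol μ t p * (P p.1 p.2 s').toReal := fun s' => by
              rw [← Finset.mul_sum, pmf_sum_one, mul_one]
            rw [Finset.sum_congr rfl fun s' _ => h1 s', ← Finset.mul_sum, pmf_sum_one, mul_one]

lemma dD_le_mass (hμ : ∀ s, 0 ≤ μ s) (t : ℕ) (p : S × A) :
    dD P pol μ t p ≤ ∑ s : S, μ s := by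
  rw [← dD_mass P pol μ t]
  exact Finset.single_le_sum (fun q _ => dD_nonneg P pol μ hμ t q) (Finset.mem_univ p)

lemma summable_geom_of_bound {γ C : ℝ} (hγ0 : 0 ≤ γ) (hγ1 : γ < 1) (u : ℕ → ℝ)
    (h : ∀ t, |u t| ≤ C) : Summable (fun t => γ ^ t * u t) := by
  refine Summable.of_norm_bounded
    ((summable_geometric_of_lt_one hγ0 hγ1).mul_left C) fun t => ?_
  have hg : (0:ℝ) ≤ γ ^ t := pow_nonneg hγ0 t
  calc ‖γ ^ t * u t‖ = γ ^ t * |u t| := by rw [norm_mul, Real.norm_eq_abs, Real.norm_eq_abs,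
        abs_of_nonneg hg]
    _ ≤ γ ^ t * C := by
        exact mul_le_mul_of_nonneg_left (h t) hg
    _ = C * γ ^ t := mul_comm _ _

lemma abs_sum_dD_le (hμ : ∀ s, 0 ≤ μ s) (f : S × A → ℝ) (t : ℕ) :
    |∑ p : S × A, dD P pol μ t p * f p| ≤ (∑ s : S, μ s) * ∑ p : S × A, |f p| := by
  calc |∑ p : S × A, dD P pol μ t p * f p| ≤ ∑ p : S × A, |dD P pol μ t p * f p| :=
        Finset.abs_sum_le_sum_abs _ _
    _ ≤ ∑ p : S × A, (∑ s : S, μ s) * |f p| := by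
        refine Finset.sum_le_sum fun p _ => ?_
        rw [abs_mul, abs_of_nonneg (dD_nonneg P pol μ hμ t p)]
        exact mul_le_mul_of_nonneg_right (dD_le_mass P pol μ hμ t p) (abs_nonneg _)
    _ = (∑ s : S, μ s) * ∑ p : S × A, |f p| := by rw [Finset.mul_sum]

lemma summable_dD_pair (hμ : ∀ s, 0 ≤ μ s) (f : S × A → ℝ) {γ : ℝ}
    (hγ0 : 0 ≤ γ) (hγ1 : γ < 1) :
    Summable (fun t => γ ^ t * ∑ p : S × A, dD P pol μ t p * f p) :=
  summable_geom_of_bound hγ0 hγ1 _ fun t => abs_sum_dD_le P pol μ hμ f t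

open Classical in
def deltaFn (s0 : S) : S → ℝ := fun s => if s = s0 then 1 else 0

lemma deltaFn_nonneg (s0 s : S) : 0 ≤ deltaFn s0 s := by
  unfold deltaFn; split <;> norm_num

lemma dD_decomp (t : ℕ) (p : S × A) :
    dD P pol μ t p = ∑ s0 : S, μ s0 * dD P pol (deltaFn s0) t p := by
  induction t generalizing p with
  | zero =>
      classical
      simp [dD, deltaFn]
  | succ t ih =>
      simp only [dD]
      rw [Finset.sum_congr rfl fun q (_ : q ∈ Finset.univ) => by
        rw [ih q, Finset.sum_mul, Finset.sum_mul]]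
      rw [Finset.sum_comm]
      refine Finset.sum_congr rfl fun s0 _ => ?_
      rw [Finset.mul_sum]
      refine Finset.sum_congr rfl fun q _ => by ring

def stepMu (P : S → A → PMF S) (pol : S → PMF A) (μ : S → ℝ) (s' : S) : ℝ :=
  ∑ p : S × A, μ p.1 * (pol p.1 p.2).toReal * (P p.1 p.2 s').toReal

lemma stepMu_nonneg (hμ : ∀ s, 0 ≤ μ s) (s' : S) : 0 ≤ stepMu P pol μ s' :=
  Finset.sum_nonneg fun p _ => mul_nonneg (mul_nonneg (hμ _) ENNReal.toReal_nonneg)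
    ENNReal.toReal_nonneg

lemma dD_succ_eq (t : ℕ) : dD P pol μ (t + 1) = dD P pol (stepMu P pol μ) t := by
  induction t with
  | zero =>
      funext p'
      simp only [dD, stepMu, Finset.sum_mul]
  | succ t ih =>
      funext p'
      have h1 : dD P pol μ (t + 1 + 1) p' = ∑ p : S × A,
          dD P pol μ (t + 1) p * (P p.1 p.2 p'.1).toReal * (pol p'.1 p'.2).toReal := rfl
      rw [h1, ih]
      rfl

def Jgen (P : S → A → PMF S) (pol : S → PMF A) (μ : S → ℝ) (r : S → A → ℝ) (γ : ℝ) : ℝ :=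
  ∑' t : ℕ, γ ^ t * ∑ p : S × A, dD P pol μ t p * r p.1 p.2

lemma Jret_eq_Jgen (r : S → A → ℝ) (γ : ℝ) :
    Jret P pol ρ0 r γ = Jgen P pol (fun s => (ρ0 s).toReal) r γ := by
  simp only [Jret, Jgen, dDist_eq]

lemma Jgen_decomp (r : S → A → ℝ) {γ : ℝ} (hγ0 : 0 ≤ γ) (hγ1 : γ < 1) :
    Jgen P pol μ r γ = ∑ s0 : S, μ s0 * Jgen P pol (deltaFn s0) r γ := by
  have h1 : ∀ t, γ ^ t * ∑ p : S × A, dD P pol μ t p * r p.1 p.2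
      = ∑ s0 : S, μ s0 * (γ ^ t * ∑ p : S × A, dD P pol (deltaFn s0) t p * r p.1 p.2) := by
    intro t
    rw [Finset.sum_congr rfl fun p (_ : p ∈ Finset.univ) => by
         rw [dD_decomp P pol μ t p, Finset.sum_mul]]
    rw [Finset.sum_comm, Finset.mul_sum]
    simp only [Finset.mul_sum]
    exact Finset.sum_congr rfl fun s0 _ => Finset.sum_congr rfl fun p _ => by ring
  unfold Jgen
  rw [tsum_congr h1, Summable.tsum_finsetSum (fun s0 _ => Summable.mul_left _
    (summable_dD_pair P pol (deltaFn s0) (deltaFn_nonneg s0) (fun p => r p.1 p.2) hγ0 hγ1))]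
  exact Finset.sum_congr rfl fun s0 _ => tsum_mul_left

lemma Jgen_rec (hμ : ∀ s, 0 ≤ μ s) (r : S → A → ℝ) {γ : ℝ} (hγ0 : 0 ≤ γ) (hγ1 : γ < 1) :
    Jgen P pol μ r γ = (∑ p : S × A, μ p.1 * (pol p.1 p.2).toReal * r p.1 p.2)
      + γ * Jgen P pol (stepMu P pol μ) r γ := by
  unfold Jgen
  rw [Summable.tsum_eq_zero_add (summable_dD_pair P pol μ hμ (fun p => r p.1 p.2) hγ0 hγ1)]
  congr 1
  · simp [dD]
  · rw [← tsum_mul_left]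
    refine tsum_congr fun t => ?_
    rw [dD_succ_eq, pow_succ]
    ring

lemma Vval_eq_Jgen (r : S → A → ℝ) (γ : ℝ) (s : S) :
    Vval P pol r γ s = Jgen P pol (deltaFn s) r γ := by
  have h : (fun s' => ((PMF.pure s : PMF S) s').toReal) = deltaFn s := by
    funext s'
    simp [PMF.pure_apply, deltaFn, apply_ite ENNReal.toReal]
  rw [Vval, Jret_eq_Jgen, h]

lemma Jret_decomp (r : S → A → ℝ) {γ : ℝ} (hγ0 : 0 ≤ γ) (hγ1 : γ < 1) :
    Jret P pol ρ0 r γ = ∑ s : S, (ρ0 s).toReal * Vval P pol r γ s := by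
  rw [Jret_eq_Jgen, Jgen_decomp P pol _ r hγ0 hγ1]
  exact Finset.sum_congr rfl fun s _ => by rw [Vval_eq_Jgen]

lemma Vval_bellman (r : S → A → ℝ) {γ : ℝ} (hγ0 : 0 ≤ γ) (hγ1 : γ < 1) (s : S) :
    Vval P pol r γ s = ∑ a : A, (pol s a).toReal * Qval P pol r γ s a := by
  rw [Vval_eq_Jgen, Jgen_rec P pol (deltaFn s) (deltaFn_nonneg s) r hγ0 hγ1,
    Jgen_decomp P pol (stepMu P pol (deltaFn s)) r hγ0 hγ1]
  have h0 : ∑ p : S × A, deltaFn s p.1 * (pol p.1 p.2).toReal * r p.1 p.2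
      = ∑ a : A, (pol s a).toReal * r s a := by
    rw [Fintype.sum_prod_type, Finset.sum_eq_single s
      (fun b _ hb => by simp [deltaFn, hb])
      (fun h => absurd (Finset.mem_univ s) h)]
    simp [deltaFn]
  have h1 : ∀ s', stepMu P pol (deltaFn s) s' = ∑ a : A, (pol s a).toReal * (P s a s').toReal := by
    intro s'
    rw [stepMu, Fintype.sum_prod_type, Finset.sum_eq_single s
      (fun b _ hb => by simp [deltaFn, hb])
      (fun h => absurd (Finset.mem_univ s) h)]
    simp [deltaFn]
  have h3 : ∑ s0 : S, stepMu P pol (deltaFn s) s0 * Jgen P pol (deltaFn s0) r γ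
      = ∑ s' : S, (∑ a : A, (pol s a).toReal * (P s a s').toReal) * Vval P pol r γ s' :=
    Finset.sum_congr rfl fun s' _ => by rw [h1 s', ← Vval_eq_Jgen P pol r γ s']
  rw [h0, h3]
  have h2 : γ * ∑ s' : S, (∑ a : A, (pol s a).toReal * (P s a s').toReal) * Vval P pol r γ s'
      = ∑ a : A, (pol s a).toReal * (γ * ∑ s' : S, (P s a s').toReal * Vval P pol r γ s') := by
    simp only [Finset.sum_mul, Finset.mul_sum]
    rw [Finset.sum_comm]
    exact Finset.sum_congr rfl fun a _ => Finset.sum_congr rfl fun s' _ => by ring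
  rw [h2]
  simp only [Qval, mul_add, Finset.sum_add_distrib]

lemma tsum_sub_telescope (u : ℕ → ℝ) (hsum : Summable fun t => u (t + 1) - u t)
    (hlim : Filter.Tendsto u Filter.atTop (nhds 0)) :
    ∑' t : ℕ, (u (t + 1) - u t) = - u 0 := by
  have h := hsum.hasSum.tendsto_sum_nat
  have heq : (fun n => ∑ i ∈ Finset.range n, (u (i + 1) - u i)) = fun n => u n - u 0 :=
    funext fun n => Finset.sum_range_sub u n
  rw [heq] at h
  have h2 : Filter.Tendsto (fun n => u n - u 0) Filter.atTop (nhds (0 - u 0)) :=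
    hlim.sub tendsto_const_nhds
  have h3 := tendsto_nhds_unique h h2
  rw [h3]; ring

lemma sum_dD_succ_fst (g : S → ℝ) (t : ℕ) :
    ∑ p' : S × A, dD P pol μ (t + 1) p' * g p'.1
      = ∑ p : S × A, dD P pol μ t p * ∑ s' : S, (P p.1 p.2 s').toReal * g s' := by
  simp only [dD, Finset.sum_mul]
  rw [Finset.sum_comm]
  refine Finset.sum_congr rfl fun p _ => ?_
  rw [Fintype.sum_prod_type]
  have h1 : ∀ s' : S, ∑ a' : A,
      dD P pol μ t p * (P p.1 p.2 s').toReal * (pol s' a').toReal * g s'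
      = dD P pol μ t p * ((P p.1 p.2 s').toReal * g s') := by
    intro s'
    rw [← Finset.sum_mul, ← Finset.mul_sum, pmf_sum_one, mul_one, mul_assoc]
  rw [Finset.sum_congr rfl fun s' _ => h1 s', ← Finset.mul_sum]

lemma occ_pairing {γ : ℝ} (hγ0 : 0 ≤ γ) (hγ1 : γ < 1) (f : S × A → ℝ) :
    ∑ p : S × A, occ P pol ρ0 γ p * f p
      = (1 - γ) * ∑' t : ℕ, γ ^ t * ∑ p : S × A,
          dD P pol (fun s => (ρ0 s).toReal) t p * f p := by
  have hμ : ∀ s, 0 ≤ (ρ0 s).toReal := fun s => ENNReal.toReal_nonneg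
  have h1 : ∀ p : S × A, occ P pol ρ0 γ p * f p
      = (1 - γ) * ∑' t : ℕ, γ ^ t * (dD P pol (fun s => (ρ0 s).toReal) t p * f p) := by
    intro p
    rw [occ]
    simp only [dDist_eq]
    rw [mul_assoc, ← tsum_mul_right]
    congr 1
    exact tsum_congr fun t => by ring
  have hsummp : ∀ p : S × A,
      Summable (fun t : ℕ => γ ^ t * (dD P pol (fun s => (ρ0 s).toReal) t p * f p)) := by
    intro p
    refine summable_geom_of_bound (C := (∑ s : S, (ρ0 s).toReal) * |f p|) hγ0 hγ1 _ fun t => ?_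
    calc |dD P pol (fun s => (ρ0 s).toReal) t p * f p|
        = dD P pol (fun s => (ρ0 s).toReal) t p * |f p| := by
          rw [abs_mul, abs_of_nonneg (dD_nonneg P pol _ hμ t p)]
      _ ≤ (∑ s : S, (ρ0 s).toReal) * |f p| :=
          mul_le_mul_of_nonneg_right (dD_le_mass P pol _ hμ t p) (abs_nonneg _)
  rw [Finset.sum_congr rfl fun p _ => h1 p, ← Finset.mul_sum]
  congr 1
  rw [← Summable.tsum_finsetSum (fun p (_ : p ∈ Finset.univ) => hsummp p)]
  exact tsum_congr fun t => by rw [Finset.mul_sum]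

def dDfst (P : S → A → PMF S) (pol : S → PMF A) (μ : S → ℝ) : ℕ → S → ℝ
  | 0 => μ
  | (t + 1) => fun s' => ∑ p : S × A, dD P pol μ t p * (P p.1 p.2 s').toReal

lemma dD_factor (t : ℕ) (s : S) (a : A) :
    dD P pol μ t (s, a) = dDfst P pol μ t s * (pol s a).toReal := by
  cases t with
  | zero => rfl
  | succ t => simp only [dD, dDfst, Finset.sum_mul]

lemma occ_factor (γ : ℝ) (s : S) (a : A) :
    occ P pol ρ0 γ (s, a) = stateOcc P pol ρ0 γ s * (pol s a).toReal := by
  have key : ∀ a : A, occ P pol ρ0 γ (s, a)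
      = ((1 - γ) * ∑' t : ℕ, γ ^ t * dDfst P pol (fun s => (ρ0 s).toReal) t s)
          * (pol s a).toReal := by
    intro a
    rw [occ]
    simp only [dDist_eq, dD_factor]
    rw [mul_assoc, ← tsum_mul_right]
    congr 1
    exact tsum_congr fun t => by ring
  rw [key a, stateOcc, Finset.sum_congr rfl fun b (_ : b ∈ Finset.univ) => key b,
    ← Finset.mul_sum, pmf_sum_one, mul_one]

end TelescopeAux

/-- extended telescoping lemma, corrected form: for two transition
kernels `P1,P2` and two policies `pol1,pol2`,
`J[P1](pol1) − J[P2](pol2) = (1/(1−γ)) Σ_s ν[P1,pol1](s) Σ_a (pol1(s)(a) − pol2(s)(a))·Q[P2,pol2](s,a)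
 + (γ/(1−γ)) Σ_{(s,a)} ρ[P1,pol1](s,a) Σ_{s'} (P1(s,a)(s') − P2(s,a)(s'))·V[P2,pol2](s')`. -/
theorem extended_telescoping_lemma
    {S A : Type*} [Fintype S] [Fintype A] [Nonempty S] [Nonempty A]
    (P1 P2 : S → A → PMF S) (pol1 pol2 : S → PMF A) (ρ0 : PMF S)
    (r : S → A → ℝ) (rmax : ℝ) (hrmax : 0 ≤ rmax) (hr : ∀ s a, |r s a| ≤ rmax)
    (γ : ℝ) (hγ0 : 0 ≤ γ) (hγ1 : γ < 1) :
    Jret P1 pol1 ρ0 r γ - Jret P2 pol2 ρ0 r γ =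
      (1 / (1 - γ)) * (∑ s : S, stateOcc P1 pol1 ρ0 γ s *
        ∑ a : A, ((pol1 s a).toReal - (pol2 s a).toReal) * Qval P2 pol2 r γ s a)
      + (γ / (1 - γ)) * ∑ p : S × A, occ P1 pol1 ρ0 γ p *
        ∑ s' : S, ((P1 p.1 p.2 s').toReal - (P2 p.1 p.2 s').toReal) * Vval P2 pol2 r γ s' := by
  classical
  have hμ : ∀ s : S, 0 ≤ (ρ0 s).toReal := fun s => ENNReal.toReal_nonneg
  have hγne : (1 : ℝ) - γ ≠ 0 := by linarith
  have hA : ∀ t : ℕ,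
      γ ^ (t + 1) * ∑ p : S × A,
          dD P1 pol1 (fun s => (ρ0 s).toReal) (t + 1) p * Vval P2 pol2 r γ p.1
        - γ ^ t * ∑ p : S × A,
          dD P1 pol1 (fun s => (ρ0 s).toReal) t p * Vval P2 pol2 r γ p.1
      = γ ^ t * ∑ p : S × A, dD P1 pol1 (fun s => (ρ0 s).toReal) t p *
          (γ * (∑ s' : S, (P1 p.1 p.2 s').toReal * Vval P2 pol2 r γ s')
            - Vval P2 pol2 r γ p.1) := by
    intro t
    rw [sum_dD_succ_fst P1 pol1 (fun s => (ρ0 s).toReal) (Vval P2 pol2 r γ) t,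
      Finset.mul_sum, Finset.mul_sum, Finset.mul_sum, ← Finset.sum_sub_distrib]
    exact Finset.sum_congr rfl fun p _ => by ring
  have hsumdiff : Summable (fun t : ℕ =>
      γ ^ (t + 1) * ∑ p : S × A,
          dD P1 pol1 (fun s => (ρ0 s).toReal) (t + 1) p * Vval P2 pol2 r γ p.1
        - γ ^ t * ∑ p : S × A,
          dD P1 pol1 (fun s => (ρ0 s).toReal) t p * Vval P2 pol2 r γ p.1) :=
    (summable_dD_pair P1 pol1 (fun s => (ρ0 s).toReal) hμ
      (fun p => γ * (∑ s' : S, (P1 p.1 p.2 s').toReal * Vval P2 pol2 r γ s')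
        - Vval P2 pol2 r γ p.1) hγ0 hγ1).congr fun t => (hA t).symm
  have htend : Filter.Tendsto
      (fun t : ℕ => γ ^ t * ∑ p : S × A,
        dD P1 pol1 (fun s => (ρ0 s).toReal) t p * Vval P2 pol2 r γ p.1)
      Filter.atTop (nhds 0) := by
    have hgeo : Filter.Tendsto (fun t : ℕ =>
        ((∑ s : S, (ρ0 s).toReal) * ∑ p : S × A, |Vval P2 pol2 r γ p.1|) * γ ^ t)
        Filter.atTop (nhds 0) := by
      have h := tendsto_pow_atTop_nhds_zero_of_lt_one hγ0 hγ1
      simpa using h.const_mul ((∑ s : S, (ρ0 s).toReal) * ∑ p : S × A, |Vval P2 pol2 r γ p.1|)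
    refine squeeze_zero_norm (fun t => ?_) hgeo
    calc ‖γ ^ t * ∑ p : S × A,
            dD P1 pol1 (fun s => (ρ0 s).toReal) t p * Vval P2 pol2 r γ p.1‖
        = γ ^ t * |∑ p : S × A,
            dD P1 pol1 (fun s => (ρ0 s).toReal) t p * Vval P2 pol2 r γ p.1| := by
          rw [norm_mul, Real.norm_eq_abs, Real.norm_eq_abs, abs_pow, abs_of_nonneg hγ0]
      _ ≤ γ ^ t * ((∑ s : S, (ρ0 s).toReal) * ∑ p : S × A, |Vval P2 pol2 r γ p.1|) :=
          mul_le_mul_of_nonneg_left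
            (abs_sum_dD_le P1 pol1 (fun s => (ρ0 s).toReal) hμ
              (fun p => Vval P2 pol2 r γ p.1) t)
            (pow_nonneg hγ0 t)
      _ = ((∑ s : S, (ρ0 s).toReal) * ∑ p : S × A, |Vval P2 pol2 r γ p.1|) * γ ^ t :=
          mul_comm _ _
  have htel := tsum_sub_telescope
    (fun t : ℕ => γ ^ t * ∑ p : S × A,
      dD P1 pol1 (fun s => (ρ0 s).toReal) t p * Vval P2 pol2 r γ p.1)
    hsumdiff htend
  have hu0 : (fun t : ℕ => γ ^ t * ∑ p : S × A,
        dD P1 pol1 (fun s => (ρ0 s).toReal) t p * Vval P2 pol2 r γ p.1) 0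
      = ∑ s : S, (ρ0 s).toReal * Vval P2 pol2 r γ s := by
    show γ ^ 0 * ∑ p : S × A,
        dD P1 pol1 (fun s => (ρ0 s).toReal) 0 p * Vval P2 pol2 r γ p.1 = _
    rw [pow_zero, one_mul, Fintype.sum_prod_type]
    refine Finset.sum_congr rfl fun s _ => ?_
    have h6 : ∀ a : A,
        dD P1 pol1 (fun s => (ρ0 s).toReal) 0 (s, a) * Vval P2 pol2 r γ s
        = (pol1 s a).toReal * ((ρ0 s).toReal * Vval P2 pol2 r γ s) := fun a => by
      show ((ρ0 s).toReal * (pol1 s a).toReal) * _ = _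
      ring
    rw [Finset.sum_congr rfl fun a _ => h6 a, ← Finset.sum_mul, pmf_sum_one, one_mul]
  have hop : ∀ f : S × A → ℝ,
      ∑' t : ℕ, γ ^ t * ∑ p : S × A, dD P1 pol1 (fun s => (ρ0 s).toReal) t p * f p
        = (1 / (1 - γ)) * ∑ p : S × A, occ P1 pol1 ρ0 γ p * f p := by
    intro f
    rw [occ_pairing P1 pol1 ρ0 hγ0 hγ1 f, ← mul_assoc, one_div, inv_mul_cancel₀ hγne,
      one_mul]
  have hsum1 := summable_dD_pair P1 pol1 (fun s => (ρ0 s).toReal) hμ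
    (fun p => r p.1 p.2) hγ0 hγ1
  have hsumQ := summable_dD_pair P1 pol1 (fun s => (ρ0 s).toReal) hμ
    (fun p => Qval P2 pol2 r γ p.1 p.2 - Vval P2 pol2 r γ p.1) hγ0 hγ1
  have hsumP := summable_dD_pair P1 pol1 (fun s => (ρ0 s).toReal) hμ
    (fun p => γ * ∑ s' : S, ((P1 p.1 p.2 s').toReal - (P2 p.1 p.2 s').toReal)
      * Vval P2 pol2 r γ s') hγ0 hγ1
  have hJ1 : Jret P1 pol1 ρ0 r γ
      = ∑' t : ℕ, γ ^ t * ∑ p : S × A,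
          dD P1 pol1 (fun s => (ρ0 s).toReal) t p * r p.1 p.2 :=
    Jret_eq_Jgen P1 pol1 ρ0 r γ
  have hJ2 : Jret P2 pol2 ρ0 r γ = ∑ s : S, (ρ0 s).toReal * Vval P2 pol2 r γ s :=
    Jret_decomp P2 pol2 ρ0 r hγ0 hγ1
  have hsplit : ∀ t : ℕ,
      (γ ^ t * ∑ p : S × A, dD P1 pol1 (fun s => (ρ0 s).toReal) t p * r p.1 p.2)
        + (γ ^ (t + 1) * ∑ p : S × A,
            dD P1 pol1 (fun s => (ρ0 s).toReal) (t + 1) p * Vval P2 pol2 r γ p.1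
          - γ ^ t * ∑ p : S × A,
            dD P1 pol1 (fun s => (ρ0 s).toReal) t p * Vval P2 pol2 r γ p.1)
      = (γ ^ t * ∑ p : S × A, dD P1 pol1 (fun s => (ρ0 s).toReal) t p *
            (Qval P2 pol2 r γ p.1 p.2 - Vval P2 pol2 r γ p.1))
        + γ ^ t * ∑ p : S × A, dD P1 pol1 (fun s => (ρ0 s).toReal) t p *
            (γ * ∑ s' : S, ((P1 p.1 p.2 s').toReal - (P2 p.1 p.2 s').toReal)
              * Vval P2 pol2 r γ s') := by
    intro t
    rw [hA t, ← mul_add, ← mul_add, ← Finset.sum_add_distrib, ← Finset.sum_add_distrib]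
    congr 1
    refine Finset.sum_congr rfl fun p _ => ?_
    simp only [Qval, sub_mul, Finset.sum_sub_distrib]
    ring
  have e12 := (Summable.tsum_add hsum1 hsumdiff).symm.trans
    ((tsum_congr hsplit).trans (Summable.tsum_add hsumQ hsumP))
  have hmain : Jret P1 pol1 ρ0 r γ - Jret P2 pol2 ρ0 r γ
      = (∑' t : ℕ, γ ^ t * ∑ p : S × A, dD P1 pol1 (fun s => (ρ0 s).toReal) t p *
            (Qval P2 pol2 r γ p.1 p.2 - Vval P2 pol2 r γ p.1))
        + ∑' t : ℕ, γ ^ t * ∑ p : S × A, dD P1 pol1 (fun s => (ρ0 s).toReal) t p *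
            (γ * ∑ s' : S, ((P1 p.1 p.2 s').toReal - (P2 p.1 p.2 s').toReal)
              * Vval P2 pol2 r γ s') := by
    rw [hJ1, hJ2, sub_eq_add_neg, ← hu0, ← htel]
    exact e12
  rw [hmain, hop, hop]
  have hD : ∑ p : S × A, occ P1 pol1 ρ0 γ p *
        (Qval P2 pol2 r γ p.1 p.2 - Vval P2 pol2 r γ p.1)
      = ∑ s : S, stateOcc P1 pol1 ρ0 γ s *
          ∑ a : A, ((pol1 s a).toReal - (pol2 s a).toReal) * Qval P2 pol2 r γ s a := by
    rw [Fintype.sum_prod_type]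
    refine Finset.sum_congr rfl fun s _ => ?_
    have hB : Vval P2 pol2 r γ s = ∑ a : A, (pol2 s a).toReal * Qval P2 pol2 r γ s a :=
      Vval_bellman P2 pol2 r hγ0 hγ1 s
    have h7 : ∀ a : A,
        occ P1 pol1 ρ0 γ (s, a) * (Qval P2 pol2 r γ s a - Vval P2 pol2 r γ s)
        = stateOcc P1 pol1 ρ0 γ s * ((pol1 s a).toReal * Qval P2 pol2 r γ s a)
          - (pol1 s a).toReal * (stateOcc P1 pol1 ρ0 γ s * Vval P2 pol2 r γ s) := fun a => by
      rw [occ_factor P1 pol1 ρ0 γ s a]; ring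
    rw [Finset.sum_congr rfl fun a _ => h7 a, Finset.sum_sub_distrib, ← Finset.sum_mul,
      pmf_sum_one, one_mul, ← Finset.mul_sum, hB, ← mul_sub, ← Finset.sum_sub_distrib]
    congr 1
    exact Finset.sum_congr rfl fun a _ => (sub_mul _ _ _).symm
  have hE : ∑ p : S × A, occ P1 pol1 ρ0 γ p *
        (γ * ∑ s' : S, ((P1 p.1 p.2 s').toReal - (P2 p.1 p.2 s').toReal)
          * Vval P2 pol2 r γ s')
      = γ * ∑ p : S × A, occ P1 pol1 ρ0 γ p *
          ∑ s' : S, ((P1 p.1 p.2 s').toReal - (P2 p.1 p.2 s').toReal)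
            * Vval P2 pol2 r γ s' := by
    rw [Finset.mul_sum]
    exact Finset.sum_congr rfl fun p _ => by ring
  rw [hD, hE]
  ring
end

section
/- Performance difference lemma (corrected form of Lemma C.3): for a transition kernel P and two policies π1, π2 on the same finite state and action spaces (same reward, discount, and initial distribution), J[P](π1) − J[P](π2) = (1/(1−γ)) · Σ_s ν[P,π1](s) · Σ_a ( π1(s)(a) − π2(s)(a) ) · Q[P,π2](s,a). -/
open Real

noncomputable section

variable {S A : Type*} [Fintype S] [Fintype A]

namespace PDL

lemma pmf_sum_toReal {X : Type*} [Fintype X] (p : PMF X) : ∑ x : X, (p x).toReal = 1 := by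
  have h := p.tsum_coe
  rw [tsum_fintype] at h
  rw [← ENNReal.toReal_sum (fun a _ => (p.apply_ne_top a)), h, ENNReal.toReal_one]

lemma summable_geom_bdd {γ C : ℝ} (hγ0 : 0 ≤ γ) (hγ1 : γ < 1) {g : ℕ → ℝ}
    (hg : ∀ t, |g t| ≤ C) : Summable (fun t => γ ^ t * g t) := by
  apply Summable.of_norm_bounded
    ((summable_geometric_of_lt_one hγ0 hγ1).mul_right C)
  intro t
  rw [Real.norm_eq_abs, abs_mul, abs_pow, abs_of_nonneg hγ0]
  exact mul_le_mul_of_nonneg_left (hg t) (pow_nonneg hγ0 t)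

def muG (P : S → A → PMF S) (pol : S → PMF A) (μ0 : S → ℝ) : ℕ → S → ℝ
  | 0 => μ0
  | (t + 1) => fun s' =>
      ∑ p : S × A, muG P pol μ0 t p.1 * (pol p.1 p.2).toReal * (P p.1 p.2 s').toReal

lemma dDist_eq (P : S → A → PMF S) (pol : S → PMF A) (ρ0 : PMF S) :
    ∀ t p, dDist P pol ρ0 t p =
      muG P pol (fun s => (ρ0 s).toReal) t p.1 * (pol p.1 p.2).toReal := by
  intro t
  induction t with
  | zero => intro p; rfl
  | succ t ih =>
    intro p'
    show (∑ p : S × A, dDist P pol ρ0 t p * (P p.1 p.2 p'.1).toReal * (pol p'.1 p'.2).toReal)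
      = _
    rw [show muG P pol (fun s => (ρ0 s).toReal) (t+1) p'.1 =
      ∑ p : S × A, muG P pol (fun s => (ρ0 s).toReal) t p.1 * (pol p.1 p.2).toReal *
        (P p.1 p.2 p'.1).toReal from rfl, Finset.sum_mul]
    exact Finset.sum_congr rfl fun p _ => by rw [ih p]

lemma muG_nonneg (P : S → A → PMF S) (pol : S → PMF A) {μ0 : S → ℝ}
    (h0 : ∀ s, 0 ≤ μ0 s) : ∀ t s, 0 ≤ muG P pol μ0 t s := by
  intro t
  induction t with
  | zero => exact h0
  | succ t ih =>
    intro s'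
    exact Finset.sum_nonneg fun p _ => mul_nonneg (mul_nonneg (ih p.1) ENNReal.toReal_nonneg)
      ENNReal.toReal_nonneg

lemma muG_mass (P : S → A → PMF S) (pol : S → PMF A) {μ0 : S → ℝ}
    (h1 : ∑ s, μ0 s = 1) : ∀ t, ∑ s, muG P pol μ0 t s = 1 := by
  intro t
  induction t with
  | zero => exact h1
  | succ t ih =>
    show ∑ s' : S, ∑ p : S × A, muG P pol μ0 t p.1 * (pol p.1 p.2).toReal *
      (P p.1 p.2 s').toReal = 1
    rw [Finset.sum_comm]
    have : ∀ p : S × A, ∑ s' : S, muG P pol μ0 t p.1 * (pol p.1 p.2).toReal *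
        (P p.1 p.2 s').toReal = muG P pol μ0 t p.1 * (pol p.1 p.2).toReal := by
      intro p
      rw [← Finset.mul_sum, pmf_sum_toReal, mul_one]
    rw [Finset.sum_congr rfl fun p _ => this p, Fintype.sum_prod_type]
    have : ∀ s : S, ∑ a : A, muG P pol μ0 t s * (pol s a).toReal = muG P pol μ0 t s := by
      intro s; rw [← Finset.mul_sum, pmf_sum_toReal, mul_one]
    rw [Finset.sum_congr rfl fun s _ => this s, ih]

lemma muG_le_one (P : S → A → PMF S) (pol : S → PMF A) {μ0 : S → ℝ}
    (h0 : ∀ s, 0 ≤ μ0 s) (h1 : ∑ s, μ0 s = 1) (t : ℕ) (s : S) :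
    muG P pol μ0 t s ≤ 1 := by
  rw [← muG_mass P pol h1 t]
  exact Finset.single_le_sum (fun s' _ => muG_nonneg P pol h0 t s') (Finset.mem_univ s)

lemma muG_shift (P : S → A → PMF S) (pol : S → PMF A) (μ0 : S → ℝ) :
    ∀ t s, muG P pol μ0 (t + 1) s = muG P pol (muG P pol μ0 1) t s := by
  intro t
  induction t with
  | zero => intro s; rfl
  | succ t ih =>
    intro s'
    show (∑ p : S × A, muG P pol μ0 (t+1) p.1 * (pol p.1 p.2).toReal * (P p.1 p.2 s').toReal) = _
    exact Finset.sum_congr rfl fun p _ => by rw [ih p.1]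

open scoped Classical in
def e (s : S) : S → ℝ := fun s'' => if s'' = s then 1 else 0

omit [Fintype S] in
lemma e_nonneg (s s'' : S) : 0 ≤ e s s'' := by unfold e; split <;> norm_num

lemma e_mass (s : S) : ∑ s'' : S, e s s'' = 1 := by
  classical
  simp [e]

lemma muG_linear (P : S → A → PMF S) (pol : S → PMF A) (μ0 : S → ℝ) :
    ∀ t s', muG P pol μ0 t s' = ∑ s : S, μ0 s * muG P pol (e s) t s' := by
  intro t
  induction t with
  | zero =>
    intro s'
    show μ0 s' = ∑ s : S, μ0 s * e s s'
    classical
    simp [e, mul_ite]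
  | succ t ih =>
    intro s'
    show (∑ p : S × A, muG P pol μ0 t p.1 * (pol p.1 p.2).toReal * (P p.1 p.2 s').toReal) = _
    rw [Finset.sum_congr rfl (fun p _ => by
      rw [ih p.1, Finset.sum_mul, Finset.sum_mul])]
    rw [Finset.sum_comm]
    exact Finset.sum_congr rfl fun s _ => by
      show (∑ p : S × A, μ0 s * muG P pol (e s) t p.1 * (pol p.1 p.2).toReal *
        (P p.1 p.2 s').toReal) = μ0 s * muG P pol (e s) (t+1) s'
      rw [show muG P pol (e s) (t+1) s' = ∑ p : S × A, muG P pol (e s) t p.1 *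
        (pol p.1 p.2).toReal * (P p.1 p.2 s').toReal from rfl, Finset.mul_sum]
      exact Finset.sum_congr rfl fun p _ => by ring


section JG

variable (P : S → A → PMF S) (pol : S → PMF A) (r : S → A → ℝ) (γ : ℝ)

/-- Generalized return as a function of an arbitrary initial weight. -/
def JG (μ0 : S → ℝ) : ℝ :=
  ∑' t : ℕ, γ ^ t * ∑ s : S, muG P pol μ0 t s * ∑ a : A, (pol s a).toReal * r s a

/-- bound on a `muG`-weighted sum. -/
lemma abs_mu_sum_le {μ0 : S → ℝ} (h0 : ∀ s, 0 ≤ μ0 s) (h1 : ∑ s, μ0 s = 1)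
    (g : S → ℝ) (t : ℕ) :
    |∑ s : S, muG P pol μ0 t s * g s| ≤ ∑ s : S, |g s| := by
  calc |∑ s : S, muG P pol μ0 t s * g s| ≤ ∑ s : S, |muG P pol μ0 t s * g s| :=
        Finset.abs_sum_le_sum_abs _ _
    _ ≤ ∑ s : S, |g s| := by
        apply Finset.sum_le_sum
        intro s _
        rw [abs_mul, abs_of_nonneg (muG_nonneg P pol h0 t s)]
        calc muG P pol μ0 t s * |g s| ≤ 1 * |g s| :=
              mul_le_mul_of_nonneg_right (muG_le_one P pol h0 h1 t s) (abs_nonneg _)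
          _ = |g s| := one_mul _

lemma summable_mu_sum {γ : ℝ} (hγ0 : 0 ≤ γ) (hγ1 : γ < 1)
    {μ0 : S → ℝ} (h0 : ∀ s, 0 ≤ μ0 s) (h1 : ∑ s, μ0 s = 1)
    (g : S → ℝ) :
    Summable (fun t : ℕ => γ ^ t * ∑ s : S, muG P pol μ0 t s * g s) :=
  summable_geom_bdd hγ0 hγ1 (fun t => abs_mu_sum_le P pol h0 h1 g t)

lemma Jret_eq (ρ0 : PMF S) : Jret P pol ρ0 r γ = JG P pol r γ (fun s => (ρ0 s).toReal) := by
  unfold Jret JG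
  refine tsum_congr fun t => ?_
  congr 1
  rw [Fintype.sum_prod_type]
  refine Finset.sum_congr rfl fun s _ => ?_
  rw [Finset.mul_sum]
  refine Finset.sum_congr rfl fun a _ => ?_
  rw [dDist_eq P pol ρ0 t (s, a)]
  ring

lemma JG_linear {γ : ℝ} (hγ0 : 0 ≤ γ) (hγ1 : γ < 1) {μ0 : S → ℝ} :
    JG P pol r γ μ0 = ∑ s : S, μ0 s * JG P pol r γ (e s) := by
  unfold JG
  rw [Finset.sum_congr rfl (fun (s : S) (_ : s ∈ Finset.univ) =>
    (tsum_mul_left (a := μ0 s)).symm)]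
  rw [← Summable.tsum_finsetSum (fun s _ => ((summable_mu_sum P pol hγ0 hγ1 (e_nonneg s) (e_mass s)
    (fun s' => ∑ a : A, (pol s' a).toReal * r s' a)).mul_left (μ0 s)))]
  refine tsum_congr fun t => ?_
  rw [Finset.mul_sum]
  rw [Finset.sum_congr rfl (fun s' (_ : s' ∈ Finset.univ) => by
    rw [muG_linear P pol μ0 t s', Finset.sum_mul, Finset.mul_sum])]
  rw [Finset.sum_comm]
  refine Finset.sum_congr rfl fun s _ => ?_
  rw [Finset.mul_sum, Finset.mul_sum]
  exact Finset.sum_congr rfl fun s' _ => by ring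

lemma JG_step {γ : ℝ} (hγ0 : 0 ≤ γ) (hγ1 : γ < 1) {μ0 : S → ℝ}
    (h0 : ∀ s, 0 ≤ μ0 s) (h1 : ∑ s, μ0 s = 1) :
    JG P pol r γ μ0 = (∑ s : S, μ0 s * ∑ a : A, (pol s a).toReal * r s a)
      + γ * JG P pol r γ (muG P pol μ0 1) := by
  unfold JG
  rw [Summable.tsum_eq_zero_add (summable_mu_sum P pol hγ0 hγ1 h0 h1 _)]
  congr 1
  · rw [pow_zero, one_mul]; rfl
  · rw [← tsum_mul_left]
    refine tsum_congr fun t => ?_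
    rw [Finset.sum_congr rfl (fun s (_ : s ∈ Finset.univ) => by
      rw [muG_shift P pol μ0 t s])]
    rw [pow_succ]
    ring

lemma toReal_pure (s : S) : (fun s'' => ((PMF.pure s) s'').toReal) = e s := by
  classical
  funext s''
  simp only [PMF.pure_apply, e]
  split_ifs <;> simp

lemma Vval_eq {γ : ℝ} (s : S) : Vval P pol r γ s = JG P pol r γ (e s) := by
  rw [Vval, Jret_eq, toReal_pure]

lemma bellman {γ : ℝ} (hγ0 : 0 ≤ γ) (hγ1 : γ < 1) (s : S) :
    Vval P pol r γ s = ∑ a : A, (pol s a).toReal * Qval P pol r γ s a := by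
  rw [Vval_eq, JG_step P pol r hγ0 hγ1 (e_nonneg s) (e_mass s),
    JG_linear P pol r hγ0 hγ1 (μ0 := muG P pol (e s) 1)]
  have h1 : (∑ s'' : S, e s s'' * ∑ a : A, (pol s'' a).toReal * r s'' a)
      = ∑ a : A, (pol s a).toReal * r s a := by
    classical
    simp [e, ite_mul]
  have h2 : ∀ s' : S, muG P pol (e s) 1 s'
      = ∑ a : A, (pol s a).toReal * (P s a s').toReal := by
    intro s'
    show (∑ p : S × A, e s p.1 * (pol p.1 p.2).toReal * (P p.1 p.2 s').toReal) = _
    rw [Fintype.sum_prod_type]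
    classical
    simp [e, ite_mul, mul_assoc]
  have h3 : γ * ∑ s' : S, (∑ a : A, (pol s a).toReal * (P s a s').toReal) * Vval P pol r γ s'
      = ∑ a : A, (pol s a).toReal *
          (γ * ∑ s' : S, (P s a s').toReal * Vval P pol r γ s') := by
    simp only [Finset.sum_mul, Finset.mul_sum]
    rw [Finset.sum_comm]
    exact Finset.sum_congr rfl fun a _ => Finset.sum_congr rfl fun s' _ => by ring
  rw [h1, Finset.sum_congr (f := fun s' : S => muG P pol (e s) 1 s' * JG P pol r γ (e s'))
    (g := fun s' : S => (∑ a : A, (pol s a).toReal * (P s a s').toReal) * Vval P pol r γ s')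
    rfl (fun s' _ => by
      show muG P pol (e s) 1 s' * JG P pol r γ (e s') = _
      rw [h2 s', ← Vval_eq P pol r s']), h3]
  simp only [Qval]
  rw [← Finset.sum_add_distrib]
  exact Finset.sum_congr rfl fun a _ => by ring

lemma main_aux (pol2 : S → PMF A) {γ : ℝ} (hγ0 : 0 ≤ γ) (hγ1 : γ < 1) {μ0 : S → ℝ}
    (h0 : ∀ s, 0 ≤ μ0 s) (h1 : ∑ s, μ0 s = 1)
    (V2 : S → ℝ) (Q2 : S → A → ℝ)
    (hQ : ∀ s a, Q2 s a = r s a + γ * ∑ s' : S, (P s a s').toReal * V2 s')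
    (hV : ∀ s, V2 s = ∑ a : A, (pol2 s a).toReal * Q2 s a) :
    JG P pol r γ μ0 =
      (∑' t : ℕ, γ ^ t * ∑ s : S, muG P pol μ0 t s *
        ∑ a : A, ((pol s a).toReal - (pol2 s a).toReal) * Q2 s a)
      + ∑ s : S, μ0 s * V2 s := by
  set D : S → ℝ := fun s => ∑ a : A, ((pol s a).toReal - (pol2 s a).toReal) * Q2 s a with hD
  set T : ℕ → ℝ := fun t => ∑ s : S, muG P pol μ0 t s * V2 s with hT
  set c1 : S → ℝ := fun s => ∑ a : A, (pol s a).toReal * r s a with hc1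
  have hTsucc : ∀ t, T (t + 1) = ∑ s : S, muG P pol μ0 t s *
      ∑ a : A, (pol s a).toReal * ∑ s' : S, (P s a s').toReal * V2 s' := by
    intro t
    show (∑ s' : S, muG P pol μ0 (t+1) s' * V2 s') = _
    calc (∑ s' : S, muG P pol μ0 (t+1) s' * V2 s')
        = ∑ s' : S, ∑ p : S × A, muG P pol μ0 t p.1 * (pol p.1 p.2).toReal *
            (P p.1 p.2 s').toReal * V2 s' := by
          refine Finset.sum_congr rfl fun s' _ => ?_
          show (∑ p : S × A, muG P pol μ0 t p.1 * (pol p.1 p.2).toReal *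
            (P p.1 p.2 s').toReal) * V2 s' = _
          exact Finset.sum_mul _ _ _
      _ = ∑ p : S × A, ∑ s' : S, muG P pol μ0 t p.1 * (pol p.1 p.2).toReal *
            (P p.1 p.2 s').toReal * V2 s' := Finset.sum_comm
      _ = ∑ p : S × A, muG P pol μ0 t p.1 * (pol p.1 p.2).toReal *
            ∑ s' : S, (P p.1 p.2 s').toReal * V2 s' := by
          refine Finset.sum_congr rfl fun p _ => ?_
          rw [Finset.mul_sum]
          exact Finset.sum_congr rfl fun s' _ => by ring
      _ = ∑ s : S, muG P pol μ0 t s * ∑ a : A, (pol s a).toReal *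
            ∑ s' : S, (P s a s').toReal * V2 s' := by
          rw [Fintype.sum_prod_type]
          refine Finset.sum_congr rfl fun s _ => ?_
          rw [Finset.mul_sum]
          exact Finset.sum_congr rfl fun a _ => by ring
  have e0 : ∀ s, (∑ a : A, (pol s a).toReal * Q2 s a)
      = c1 s + γ * ∑ a : A, (pol s a).toReal * ∑ s' : S, (P s a s').toReal * V2 s' := by
    intro s
    rw [hc1, Finset.mul_sum, ← Finset.sum_add_distrib]
    exact Finset.sum_congr rfl fun a _ => by rw [hQ s a]; ring
  have e1 : ∀ s, (∑ a : A, (pol s a).toReal * Q2 s a) = D s + V2 s := by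
    intro s
    rw [hV s, hD, ← Finset.sum_add_distrib]
    exact Finset.sum_congr rfl fun a _ => by ring
  have claimA : ∀ t, (∑ s : S, muG P pol μ0 t s * (∑ a : A, (pol s a).toReal * Q2 s a))
      = (∑ s : S, muG P pol μ0 t s * c1 s) + γ * T (t + 1) := by
    intro t
    rw [hTsucc t, Finset.mul_sum, ← Finset.sum_add_distrib]
    exact Finset.sum_congr rfl fun s _ => by rw [e0 s]; ring
  have claimB : ∀ t, (∑ s : S, muG P pol μ0 t s * (∑ a : A, (pol s a).toReal * Q2 s a))
      = (∑ s : S, muG P pol μ0 t s * D s) + T t := by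
    intro t
    rw [hT]
    show _ = _ + ∑ s : S, muG P pol μ0 t s * V2 s
    rw [← Finset.sum_add_distrib]
    exact Finset.sum_congr rfl fun s _ => by rw [e1 s]; ring
  have key : ∀ t, γ ^ t * ∑ s : S, muG P pol μ0 t s * c1 s
      = γ ^ t * (∑ s : S, muG P pol μ0 t s * D s)
        + (γ ^ t * T t - γ ^ (t + 1) * T (t + 1)) := by
    intro t
    have h := (claimA t).symm.trans (claimB t)
    have : (∑ s : S, muG P pol μ0 t s * c1 s)
        = (∑ s : S, muG P pol μ0 t s * D s) + T t - γ * T (t + 1) := by linarith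
    rw [this, pow_succ]
    ring
  have hA : Summable (fun t : ℕ => γ ^ t * ∑ s : S, muG P pol μ0 t s * D s) :=
    summable_mu_sum P pol hγ0 hγ1 h0 h1 D
  have hB : Summable (fun t : ℕ => γ ^ t * T t) :=
    summable_mu_sum P pol hγ0 hγ1 h0 h1 V2
  have hB' : Summable (fun t : ℕ => γ ^ (t + 1) * T (t + 1)) :=
    hB.comp_injective Nat.succ_injective
  calc JG P pol r γ μ0
      = ∑' t : ℕ, (γ ^ t * (∑ s : S, muG P pol μ0 t s * D s)
          + (γ ^ t * T t - γ ^ (t + 1) * T (t + 1))) := tsum_congr key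
    _ = (∑' t : ℕ, γ ^ t * ∑ s : S, muG P pol μ0 t s * D s)
          + ∑' t : ℕ, (γ ^ t * T t - γ ^ (t + 1) * T (t + 1)) := Summable.tsum_add hA (hB.sub hB')
    _ = (∑' t : ℕ, γ ^ t * ∑ s : S, muG P pol μ0 t s * D s)
          + ((∑' t : ℕ, γ ^ t * T t) - ∑' t : ℕ, γ ^ (t + 1) * T (t + 1)) := by
          rw [Summable.tsum_sub hB hB']
    _ = (∑' t : ℕ, γ ^ t * ∑ s : S, muG P pol μ0 t s * D s) + γ ^ 0 * T 0 := by
          rw [Summable.tsum_eq_zero_add hB]; ring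
    _ = (∑' t : ℕ, γ ^ t * ∑ s : S, muG P pol μ0 t s * D s) + ∑ s : S, μ0 s * V2 s := by
          rw [pow_zero, one_mul]; rfl

lemma summable_point {γ : ℝ} (hγ0 : 0 ≤ γ) (hγ1 : γ < 1) {μ0 : S → ℝ}
    (h0 : ∀ s, 0 ≤ μ0 s) (h1 : ∑ s, μ0 s = 1) (s : S) (c : ℝ) :
    Summable (fun t : ℕ => γ ^ t * (muG P pol μ0 t s * c)) := by
  refine summable_geom_bdd hγ0 hγ1 (C := |c|) fun t => ?_
  rw [abs_mul, abs_of_nonneg (muG_nonneg P pol h0 t s)]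
  calc muG P pol μ0 t s * |c| ≤ 1 * |c| :=
        mul_le_mul_of_nonneg_right (muG_le_one P pol h0 h1 t s) (abs_nonneg _)
    _ = |c| := one_mul _

end JG

end PDL

end

/-- performance difference lemma, corrected form: for a transition
kernel `P` and two policies `pol1,pol2`,
`J[P](pol1) − J[P](pol2) = (1/(1−γ)) Σ_s ν[P,pol1](s) Σ_a (pol1(s)(a) − pol2(s)(a))·Q[P,pol2](s,a)`. -/
theorem performance_difference_lemma
    {S A : Type*} [Fintype S] [Fintype A] [Nonempty S] [Nonempty A]
    (P : S → A → PMF S) (pol1 pol2 : S → PMF A) (ρ0 : PMF S)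
    (r : S → A → ℝ) (rmax : ℝ) (hrmax : 0 ≤ rmax) (hr : ∀ s a, |r s a| ≤ rmax)
    (γ : ℝ) (hγ0 : 0 ≤ γ) (hγ1 : γ < 1) :
    Jret P pol1 ρ0 r γ - Jret P pol2 ρ0 r γ =
      (1 / (1 - γ)) * ∑ s : S, stateOcc P pol1 ρ0 γ s *
        ∑ a : A, ((pol1 s a).toReal - (pol2 s a).toReal) * Qval P pol2 r γ s a := by
    classical
  have hρ0 : ∀ s : S, 0 ≤ (ρ0 s).toReal := fun s => ENNReal.toReal_nonneg
  have hρ1 : ∑ s : S, (ρ0 s).toReal = 1 := PDL.pmf_sum_toReal ρ0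
  have hne : (1 : ℝ) - γ ≠ 0 := ne_of_gt (by linarith)
  have hV : ∀ s, Vval P pol2 r γ s = ∑ a : A, (pol2 s a).toReal * Qval P pol2 r γ s a :=
    PDL.bellman P pol2 r hγ0 hγ1
  have hQ : ∀ s a, Qval P pol2 r γ s a
      = r s a + γ * ∑ s' : S, (P s a s').toReal * Vval P pol2 r γ s' := fun s a => rfl
  have hJ1 := PDL.main_aux P pol1 r pol2 hγ0 hγ1
    (μ0 := fun s => (ρ0 s).toReal) hρ0 hρ1 (Vval P pol2 r γ) (Qval P pol2 r γ) hQ hV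
  have hJ2 : Jret P pol2 ρ0 r γ = ∑ s : S, (ρ0 s).toReal * Vval P pol2 r γ s := by
    rw [PDL.Jret_eq P pol2 r γ ρ0, PDL.JG_linear P pol2 r hγ0 hγ1]
    exact Finset.sum_congr rfl fun s _ => by rw [← PDL.Vval_eq P pol2 r s]
  rw [PDL.Jret_eq P pol1 r γ ρ0, hJ1, hJ2, add_sub_cancel_right]
  -- swap tsum and sum
  have hswap : (∑' t : ℕ, γ ^ t * ∑ s : S, PDL.muG P pol1 (fun s'' => (ρ0 s'').toReal) t s *
        ∑ a : A, ((pol1 s a).toReal - (pol2 s a).toReal) * Qval P pol2 r γ s a)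
      = ∑ s : S, (∑' t : ℕ, γ ^ t * PDL.muG P pol1 (fun s'' => (ρ0 s'').toReal) t s) *
        ∑ a : A, ((pol1 s a).toReal - (pol2 s a).toReal) * Qval P pol2 r γ s a := by
    rw [tsum_congr (fun t => Finset.mul_sum (Finset.univ) _ (γ ^ t))]
    rw [Summable.tsum_finsetSum (fun s _ => PDL.summable_point P pol1 hγ0 hγ1 hρ0 hρ1 s _)]
    refine Finset.sum_congr rfl fun s _ => ?_
    rw [← tsum_mul_right]
    exact tsum_congr fun t => by ring
  rw [hswap]
  have hso : ∀ s : S, stateOcc P pol1 ρ0 γ s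
      = (1 - γ) * ∑' t : ℕ, γ ^ t * PDL.muG P pol1 (fun s'' => (ρ0 s'').toReal) t s := by
    intro s
    unfold stateOcc occ
    have h1 : ∀ a : A, (∑' t : ℕ, γ ^ t * dDist P pol1 ρ0 t (s, a))
        = (∑' t : ℕ, γ ^ t * PDL.muG P pol1 (fun s'' => (ρ0 s'').toReal) t s) *
            (pol1 s a).toReal := by
      intro a
      rw [← tsum_mul_right]
      refine tsum_congr fun t => ?_
      rw [PDL.dDist_eq P pol1 ρ0 t (s, a)]
      show γ ^ t * (PDL.muG P pol1 (fun s'' => (ρ0 s'').toReal) t s * (pol1 s a).toReal) = _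
      ring
    rw [Finset.sum_congr rfl (fun a _ => by rw [h1 a])]
    rw [← Finset.mul_sum, ← Finset.mul_sum, PDL.pmf_sum_toReal, mul_one, mul_comm]
  have hthis : ∀ s : S, stateOcc P pol1 ρ0 γ s *
        (∑ a : A, ((pol1 s a).toReal - (pol2 s a).toReal) * Qval P pol2 r γ s a)
      = (1 - γ) * ((∑' t : ℕ, γ ^ t * PDL.muG P pol1 (fun s'' => (ρ0 s'').toReal) t s) *
        ∑ a : A, ((pol1 s a).toReal - (pol2 s a).toReal) * Qval P pol2 r γ s a) := by
    intro s
    rw [hso s]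
    ring
  rw [Finset.sum_congr rfl (fun s _ => hthis s), ← Finset.mul_sum, ← mul_assoc, one_div,
    inv_mul_cancel₀ hne, one_mul]
end

section
/- Simulation bound in total variation: for two transition kernels P1 and P2 on the same finite state and action spaces (same reward, discount, and initial distribution) and any policy π, J[P1](π) − J[P2](π) ≤ (2γ·r_max/(1−γ)²) · Σ_{(s,a)} ρ[P1,π](s,a) · D_TV( P1(s,a), P2(s,a) ). -/
open Real

noncomputable section
namespace SimAux
variable {S A : Type*} [Fintype S] [Fintype A]


lemma pmf_sum_toReal {X : Type*} [Fintype X] (p : PMF X) :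
    ∑ x : X, (p x).toReal = 1 := by
  rw [← ENNReal.toReal_sum (fun x _ => PMF.apply_ne_top p x), ← tsum_fintype (L := SummationFilter.unconditional X), p.tsum_coe,
    ENNReal.toReal_one]

variable (P P1 P2 : S → A → PMF S) (pol : S → PMF A) (ρ0 : PMF S)

lemma dDist_zero (p : S × A) :
    dDist P pol ρ0 0 p = (ρ0 p.1).toReal * (pol p.1 p.2).toReal := rfl

lemma dDist_succ (t : ℕ) (p' : S × A) :
    dDist P pol ρ0 (t + 1) p' =
      ∑ p : S × A, dDist P pol ρ0 t p * (P p.1 p.2 p'.1).toReal * (pol p'.1 p'.2).toReal := rfl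

lemma dDist_nonneg (t : ℕ) (p : S × A) : 0 ≤ dDist P pol ρ0 t p := by
  induction t generalizing p with
  | zero => exact mul_nonneg ENNReal.toReal_nonneg ENNReal.toReal_nonneg
  | succ t ih =>
    refine Finset.sum_nonneg fun q _ => ?_
    exact mul_nonneg (mul_nonneg (ih q) ENNReal.toReal_nonneg) ENNReal.toReal_nonneg

lemma sum_prod_pol (f : S → ℝ) :
    ∑ p : S × A, f p.1 * (pol p.1 p.2).toReal = ∑ s : S, f s := by
  rw [Fintype.sum_prod_type]
  refine Finset.sum_congr rfl fun s _ => ?_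
  show ∑ a : A, f s * (pol s a).toReal = f s
  rw [← Finset.mul_sum, pmf_sum_toReal, mul_one]

lemma dDist_sum_one (t : ℕ) : ∑ p : S × A, dDist P pol ρ0 t p = 1 := by
  induction t with
  | zero =>
    have h := sum_prod_pol pol (fun s => (ρ0 s).toReal)
    calc ∑ p : S × A, dDist P pol ρ0 0 p
        = ∑ s : S, (ρ0 s).toReal := h
      _ = 1 := pmf_sum_toReal ρ0
  | succ t ih =>
    have h1 : ∀ p' : S × A, dDist P pol ρ0 (t + 1) p' =
        (∑ p : S × A, dDist P pol ρ0 t p * (P p.1 p.2 p'.1).toReal) * (pol p'.1 p'.2).toReal := by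
      intro p'; rw [dDist_succ, Finset.sum_mul]
    calc ∑ p' : S × A, dDist P pol ρ0 (t + 1) p'
        = ∑ p' : S × A, (∑ p : S × A, dDist P pol ρ0 t p * (P p.1 p.2 p'.1).toReal) *
            (pol p'.1 p'.2).toReal := by exact Finset.sum_congr rfl fun p' _ => h1 p'
      _ = ∑ s' : S, ∑ p : S × A, dDist P pol ρ0 t p * (P p.1 p.2 s').toReal :=
            sum_prod_pol pol (fun s' => ∑ p : S × A, dDist P pol ρ0 t p * (P p.1 p.2 s').toReal)
      _ = ∑ p : S × A, ∑ s' : S, dDist P pol ρ0 t p * (P p.1 p.2 s').toReal := Finset.sum_comm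
      _ = ∑ p : S × A, dDist P pol ρ0 t p := by
            refine Finset.sum_congr rfl fun p _ => ?_
            rw [← Finset.mul_sum, pmf_sum_toReal, mul_one]
      _ = 1 := ih

lemma dDist_le_one (t : ℕ) (p : S × A) : dDist P pol ρ0 t p ≤ 1 := by
  rw [← dDist_sum_one P pol ρ0 t]
  exact Finset.single_le_sum (fun q _ => dDist_nonneg P pol ρ0 t q) (Finset.mem_univ p)

lemma dTV_nonneg {X : Type*} [Fintype X] (p q : PMF X) : 0 ≤ dTV p q :=
  mul_nonneg (by norm_num) (Finset.sum_nonneg fun _ _ => abs_nonneg _)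

lemma dTV_le_one {X : Type*} [Fintype X] (p q : PMF X) : dTV p q ≤ 1 := by
  unfold dTV
  have h : ∑ x : X, |(p x).toReal - (q x).toReal| ≤
      ∑ x : X, ((p x).toReal + (q x).toReal) := by
    refine Finset.sum_le_sum fun x _ => ?_
    have h1 : (0:ℝ) ≤ (p x).toReal := ENNReal.toReal_nonneg
    have h2 : (0:ℝ) ≤ (q x).toReal := ENNReal.toReal_nonneg
    rw [abs_sub_le_iff]; constructor <;> linarith
  rw [Finset.sum_add_distrib, pmf_sum_toReal, pmf_sum_toReal] at h
  linarith

lemma sum_abs_eq_two_dTV {X : Type*} [Fintype X] (p q : PMF X) :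
    ∑ x : X, |(p x).toReal - (q x).toReal| = 2 * dTV p q := by
  unfold dTV; ring




/-- `ε_t = Σ_p d_t^{P1}(p) · D_TV(P1(p),P2(p))`. -/
def eps (t : ℕ) : ℝ :=
  ∑ p : S × A, dDist P1 pol ρ0 t p * dTV (P1 p.1 p.2) (P2 p.1 p.2)

/-- `Δ_t = Σ_p |d_t^{P1}(p) − d_t^{P2}(p)|`. -/
def del (t : ℕ) : ℝ :=
  ∑ p : S × A, |dDist P1 pol ρ0 t p - dDist P2 pol ρ0 t p|

lemma eps_nonneg (t : ℕ) : 0 ≤ eps P1 P2 pol ρ0 t :=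
  Finset.sum_nonneg fun p _ =>
    mul_nonneg (dDist_nonneg _ _ _ _ _) (dTV_nonneg _ _)

lemma eps_le_one (t : ℕ) : eps P1 P2 pol ρ0 t ≤ 1 := by
  calc eps P1 P2 pol ρ0 t ≤ ∑ p : S × A, dDist P1 pol ρ0 t p := by
        refine Finset.sum_le_sum fun p _ => ?_
        calc dDist P1 pol ρ0 t p * dTV (P1 p.1 p.2) (P2 p.1 p.2)
            ≤ dDist P1 pol ρ0 t p * 1 :=
              mul_le_mul_of_nonneg_left (dTV_le_one _ _) (dDist_nonneg _ _ _ _ _)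
          _ = dDist P1 pol ρ0 t p := mul_one _
    _ = 1 := dDist_sum_one _ _ _ _

lemma del_nonneg (t : ℕ) : 0 ≤ del P1 P2 pol ρ0 t :=
  Finset.sum_nonneg fun _ _ => abs_nonneg _

lemma del_zero : del P1 P2 pol ρ0 0 = 0 := by
  unfold del
  simp [dDist_zero]

lemma del_succ_le (t : ℕ) :
    del P1 P2 pol ρ0 (t + 1) ≤ del P1 P2 pol ρ0 t + 2 * eps P1 P2 pol ρ0 t := by
  set d1 := dDist P1 pol ρ0 t with hd1
  set d2 := dDist P2 pol ρ0 t with hd2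
  have key : ∀ p' : S × A, |dDist P1 pol ρ0 (t+1) p' - dDist P2 pol ρ0 (t+1) p'| ≤
      ∑ p : S × A, (|d1 p - d2 p| * (P2 p.1 p.2 p'.1).toReal +
        d1 p * |(P1 p.1 p.2 p'.1).toReal - (P2 p.1 p.2 p'.1).toReal|) *
          (pol p'.1 p'.2).toReal := by
    intro p'
    rw [dDist_succ, dDist_succ, ← Finset.sum_sub_distrib]
    refine (Finset.abs_sum_le_sum_abs _ _).trans (Finset.sum_le_sum fun p _ => ?_)
    have h1 : d1 p * (P1 p.1 p.2 p'.1).toReal * (pol p'.1 p'.2).toReal -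
        d2 p * (P2 p.1 p.2 p'.1).toReal * (pol p'.1 p'.2).toReal =
        ((d1 p - d2 p) * (P2 p.1 p.2 p'.1).toReal +
          d1 p * ((P1 p.1 p.2 p'.1).toReal - (P2 p.1 p.2 p'.1).toReal)) *
          (pol p'.1 p'.2).toReal := by ring
    rw [h1, abs_mul, abs_of_nonneg (ENNReal.toReal_nonneg :
      (0:ℝ) ≤ (pol p'.1 p'.2).toReal)]
    refine mul_le_mul_of_nonneg_right ?_ ENNReal.toReal_nonneg
    refine (abs_add_le _ _).trans ?_
    rw [abs_mul, abs_mul, abs_of_nonneg (ENNReal.toReal_nonneg :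
      (0:ℝ) ≤ (P2 p.1 p.2 p'.1).toReal),
      abs_of_nonneg (dDist_nonneg P1 pol ρ0 t p)]
  calc del P1 P2 pol ρ0 (t + 1)
      ≤ ∑ p' : S × A, ∑ p : S × A,
          (|d1 p - d2 p| * (P2 p.1 p.2 p'.1).toReal +
            d1 p * |(P1 p.1 p.2 p'.1).toReal - (P2 p.1 p.2 p'.1).toReal|) *
            (pol p'.1 p'.2).toReal := Finset.sum_le_sum fun p' _ => key p'
    _ = ∑ p : S × A, ∑ p' : S × A,
          (|d1 p - d2 p| * (P2 p.1 p.2 p'.1).toReal +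
            d1 p * |(P1 p.1 p.2 p'.1).toReal - (P2 p.1 p.2 p'.1).toReal|) *
            (pol p'.1 p'.2).toReal := Finset.sum_comm
    _ = ∑ p : S × A, ∑ s' : S,
          (|d1 p - d2 p| * (P2 p.1 p.2 s').toReal +
            d1 p * |(P1 p.1 p.2 s').toReal - (P2 p.1 p.2 s').toReal|) := by
        refine Finset.sum_congr rfl fun p _ => ?_
        exact sum_prod_pol pol (fun s' => |d1 p - d2 p| * (P2 p.1 p.2 s').toReal +
          d1 p * |(P1 p.1 p.2 s').toReal - (P2 p.1 p.2 s').toReal|)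
    _ = ∑ p : S × A, (|d1 p - d2 p| +
          d1 p * (2 * dTV (P1 p.1 p.2) (P2 p.1 p.2))) := by
        refine Finset.sum_congr rfl fun p _ => ?_
        rw [Finset.sum_add_distrib, ← Finset.mul_sum, ← Finset.mul_sum,
          pmf_sum_toReal, mul_one, sum_abs_eq_two_dTV]
    _ = del P1 P2 pol ρ0 t + 2 * eps P1 P2 pol ρ0 t := by
        rw [Finset.sum_add_distrib]
        unfold del eps
        rw [← hd1, ← hd2]
        congr 1
        rw [Finset.mul_sum]
        exact Finset.sum_congr rfl fun p _ => by ring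

lemma del_le (t : ℕ) :
    del P1 P2 pol ρ0 t ≤ 2 * ∑ k ∈ Finset.range t, eps P1 P2 pol ρ0 k := by
  induction t with
  | zero => simp [del_zero]
  | succ t ih =>
    calc del P1 P2 pol ρ0 (t + 1) ≤ del P1 P2 pol ρ0 t + 2 * eps P1 P2 pol ρ0 t :=
          del_succ_le P1 P2 pol ρ0 t
      _ ≤ 2 * ∑ k ∈ Finset.range t, eps P1 P2 pol ρ0 k + 2 * eps P1 P2 pol ρ0 t := by
          linarith
      _ = 2 * ∑ k ∈ Finset.range (t + 1), eps P1 P2 pol ρ0 k := by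
          rw [Finset.sum_range_succ]; ring


end SimAux
end

/-- simulation bound in total variation: for two transition kernels
`P1,P2` and any policy `pol`,
`J[P1](pol) − J[P2](pol) ≤ (2γ·r_max/(1−γ)²) Σ_{(s,a)} ρ[P1,pol](s,a)·D_TV(P1(s,a), P2(s,a))`. -/
theorem simulation_bound_tv
    {S A : Type*} [Fintype S] [Fintype A] [Nonempty S] [Nonempty A]
    (P1 P2 : S → A → PMF S) (pol : S → PMF A) (ρ0 : PMF S)
    (r : S → A → ℝ) (rmax : ℝ) (hrmax : 0 ≤ rmax) (hr : ∀ s a, |r s a| ≤ rmax)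
    (γ : ℝ) (hγ0 : 0 ≤ γ) (hγ1 : γ < 1) :
    Jret P1 pol ρ0 r γ - Jret P2 pol ρ0 r γ ≤
      (2 * γ * rmax / (1 - γ) ^ 2) *
        ∑ p : S × A, occ P1 pol ρ0 γ p * dTV (P1 p.1 p.2) (P2 p.1 p.2) := by
  classical
  have hne : (1 : ℝ) - γ ≠ 0 := by linarith
  have hγn : ‖γ‖ < 1 := by rw [Real.norm_eq_abs, abs_lt]; constructor <;> linarith
  have hpow : ∀ t : ℕ, (0:ℝ) ≤ γ ^ t := fun t => pow_nonneg hγ0 t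
  have hgeo : Summable (fun t : ℕ => γ ^ t) := summable_geometric_of_lt_one hγ0 hγ1
  have hngeo : Summable (fun t : ℕ => (t : ℝ) * γ ^ t) := by
    simpa using summable_pow_mul_geometric_of_norm_lt_one 1 hγn
  set ε : ℕ → ℝ := SimAux.eps P1 P2 pol ρ0 with hεdef
  set Δ : ℕ → ℝ := SimAux.del P1 P2 pol ρ0 with hΔdef
  set E : ℕ → ℝ := fun t => ∑ k ∈ Finset.range t, ε k with hEdef
  have hε0 : ∀ t, 0 ≤ ε t := fun t => SimAux.eps_nonneg P1 P2 pol ρ0 t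
  have hε1 : ∀ t, ε t ≤ 1 := fun t => SimAux.eps_le_one P1 P2 pol ρ0 t
  have hE0 : ∀ t, 0 ≤ E t := fun t => Finset.sum_nonneg fun k _ => hε0 k
  have hEt : ∀ t, E t ≤ (t : ℝ) := by
    intro t
    calc E t ≤ ∑ k ∈ Finset.range t, (1:ℝ) := Finset.sum_le_sum fun k _ => hε1 k
      _ = (t : ℝ) := by simp
  have hΔE : ∀ t, Δ t ≤ 2 * E t := fun t => SimAux.del_le P1 P2 pol ρ0 t
  have hΔ0 : ∀ t, 0 ≤ Δ t := fun t => SimAux.del_nonneg P1 P2 pol ρ0 t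
  -- summability facts
  have hsumT : Summable (fun t : ℕ => γ ^ t * ε t) := by
    refine Summable.of_nonneg_of_le (fun t => mul_nonneg (hpow t) (hε0 t)) (fun t => ?_) hgeo
    calc γ ^ t * ε t ≤ γ ^ t * 1 := mul_le_mul_of_nonneg_left (hε1 t) (hpow t)
      _ = γ ^ t := mul_one _
  have hsumE : Summable (fun t : ℕ => γ ^ t * E t) := by
    refine Summable.of_nonneg_of_le (fun t => mul_nonneg (hpow t) (hE0 t)) (fun t => ?_) hngeo
    calc γ ^ t * E t ≤ γ ^ t * (t : ℝ) := mul_le_mul_of_nonneg_left (hEt t) (hpow t)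
      _ = (t : ℝ) * γ ^ t := mul_comm _ _
  set T : ℝ := ∑' t : ℕ, γ ^ t * ε t with hTdef
  have hT0 : 0 ≤ T := tsum_nonneg fun t => mul_nonneg (hpow t) (hε0 t)
  -- bound on per-step reward sums
  have hJb : ∀ (P : S → A → PMF S) (t : ℕ),
      |∑ p : S × A, dDist P pol ρ0 t p * r p.1 p.2| ≤ rmax := by
    intro P t
    calc |∑ p : S × A, dDist P pol ρ0 t p * r p.1 p.2|
        ≤ ∑ p : S × A, |dDist P pol ρ0 t p * r p.1 p.2| := Finset.abs_sum_le_sum_abs _ _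
      _ ≤ ∑ p : S × A, dDist P pol ρ0 t p * rmax := by
          refine Finset.sum_le_sum fun p _ => ?_
          rw [abs_mul, abs_of_nonneg (SimAux.dDist_nonneg P pol ρ0 t p)]
          exact mul_le_mul_of_nonneg_left (hr p.1 p.2) (SimAux.dDist_nonneg P pol ρ0 t p)
      _ = rmax := by rw [← Finset.sum_mul, SimAux.dDist_sum_one, one_mul]
  have hsumJ : ∀ P : S → A → PMF S,
      Summable (fun t : ℕ => γ ^ t * ∑ p : S × A, dDist P pol ρ0 t p * r p.1 p.2) := by
    intro P
    refine Summable.of_norm_bounded (hgeo.mul_left rmax) (fun t => ?_)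
    rw [Real.norm_eq_abs, abs_mul, abs_of_nonneg (hpow t), mul_comm]
    exact mul_le_mul_of_nonneg_right (hJb P t) (hpow t)
  -- Step 1: difference of returns as a single tsum
  have hstep1 : Jret P1 pol ρ0 r γ - Jret P2 pol ρ0 r γ =
      ∑' t : ℕ, γ ^ t * ((∑ p : S × A, dDist P1 pol ρ0 t p * r p.1 p.2) -
        (∑ p : S × A, dDist P2 pol ρ0 t p * r p.1 p.2)) := by
    rw [Jret, Jret, ← Summable.tsum_sub (hsumJ P1) (hsumJ P2)]
    exact tsum_congr fun t => by ring
  -- per-term bound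
  have hterm : ∀ t : ℕ, γ ^ t * ((∑ p : S × A, dDist P1 pol ρ0 t p * r p.1 p.2) -
      (∑ p : S × A, dDist P2 pol ρ0 t p * r p.1 p.2)) ≤ 2 * rmax * (γ ^ t * E t) := by
    intro t
    have hc : (∑ p : S × A, dDist P1 pol ρ0 t p * r p.1 p.2) -
        (∑ p : S × A, dDist P2 pol ρ0 t p * r p.1 p.2) ≤ rmax * Δ t := by
      rw [← Finset.sum_sub_distrib]
      calc ∑ p : S × A, (dDist P1 pol ρ0 t p * r p.1 p.2 - dDist P2 pol ρ0 t p * r p.1 p.2)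
          ≤ ∑ p : S × A, |dDist P1 pol ρ0 t p - dDist P2 pol ρ0 t p| * rmax := by
            refine Finset.sum_le_sum fun p _ => ?_
            have h1 : dDist P1 pol ρ0 t p * r p.1 p.2 - dDist P2 pol ρ0 t p * r p.1 p.2 =
                (dDist P1 pol ρ0 t p - dDist P2 pol ρ0 t p) * r p.1 p.2 := by ring
            rw [h1]
            calc (dDist P1 pol ρ0 t p - dDist P2 pol ρ0 t p) * r p.1 p.2
                ≤ |(dDist P1 pol ρ0 t p - dDist P2 pol ρ0 t p) * r p.1 p.2| := le_abs_self _
              _ = |dDist P1 pol ρ0 t p - dDist P2 pol ρ0 t p| * |r p.1 p.2| := abs_mul _ _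
              _ ≤ |dDist P1 pol ρ0 t p - dDist P2 pol ρ0 t p| * rmax :=
                  mul_le_mul_of_nonneg_left (hr p.1 p.2) (abs_nonneg _)
        _ = rmax * Δ t := by
            rw [hΔdef, SimAux.del, Finset.mul_sum]
            exact Finset.sum_congr rfl fun p _ => mul_comm _ _
    calc γ ^ t * ((∑ p : S × A, dDist P1 pol ρ0 t p * r p.1 p.2) -
          (∑ p : S × A, dDist P2 pol ρ0 t p * r p.1 p.2))
        ≤ γ ^ t * (rmax * Δ t) := mul_le_mul_of_nonneg_left hc (hpow t)
      _ ≤ γ ^ t * (rmax * (2 * E t)) := by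
          refine mul_le_mul_of_nonneg_left ?_ (hpow t)
          exact mul_le_mul_of_nonneg_left (hΔE t) hrmax
      _ = 2 * rmax * (γ ^ t * E t) := by ring
  -- summability of the LHS sequence
  have hsumLHS : Summable (fun t : ℕ => γ ^ t *
      ((∑ p : S × A, dDist P1 pol ρ0 t p * r p.1 p.2) -
        (∑ p : S × A, dDist P2 pol ρ0 t p * r p.1 p.2))) := by
    have := (hsumJ P1).sub (hsumJ P2)
    refine this.congr fun t => ?_
    ring
  -- Step 2: sum the bound
  have hstep2 : Jret P1 pol ρ0 r γ - Jret P2 pol ρ0 r γ ≤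
      2 * rmax * ∑' t : ℕ, γ ^ t * E t := by
    rw [hstep1, ← tsum_mul_left]
    exact Summable.tsum_le_tsum hterm hsumLHS (hsumE.mul_left (2 * rmax))
  -- Step 3: closed form of ∑' γ^t E t
  have hS : ∑' t : ℕ, γ ^ t * E t = γ * T / (1 - γ) := by
    have h0 : ∑' t : ℕ, γ ^ t * E t =
        γ ^ 0 * E 0 + ∑' t : ℕ, γ ^ (t + 1) * E (t + 1) := Summable.tsum_eq_zero_add hsumE
    have hE0' : E 0 = 0 := by simp [hEdef]
    have hshift : ∀ t : ℕ, γ ^ (t + 1) * E (t + 1) =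
        γ * (γ ^ t * E t) + γ * (γ ^ t * ε t) := by
      intro t
      have : E (t + 1) = E t + ε t := by rw [hEdef]; exact Finset.sum_range_succ _ _
      rw [this, pow_succ]; ring
    have h1 : ∑' t : ℕ, γ ^ (t + 1) * E (t + 1) =
        γ * (∑' t : ℕ, γ ^ t * E t) + γ * T := by
      calc ∑' t : ℕ, γ ^ (t + 1) * E (t + 1)
          = ∑' t : ℕ, (γ * (γ ^ t * E t) + γ * (γ ^ t * ε t)) := tsum_congr hshift
        _ = (∑' t : ℕ, γ * (γ ^ t * E t)) + ∑' t : ℕ, γ * (γ ^ t * ε t) :=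
            Summable.tsum_add (hsumE.mul_left γ) (hsumT.mul_left γ)
        _ = γ * (∑' t : ℕ, γ ^ t * E t) + γ * T := by rw [tsum_mul_left, tsum_mul_left]
    rw [hE0', h1] at h0
    have : (1 - γ) * (∑' t : ℕ, γ ^ t * E t) = γ * T := by linarith
    field_simp at this ⊢
    linarith
  -- Step 4: RHS equals (1-γ)·T times the constant
  have hRHS : ∑ p : S × A, occ P1 pol ρ0 γ p * dTV (P1 p.1 p.2) (P2 p.1 p.2) =
      (1 - γ) * T := by
    have hsump : ∀ p : S × A, Summable (fun t : ℕ =>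
        γ ^ t * dDist P1 pol ρ0 t p * dTV (P1 p.1 p.2) (P2 p.1 p.2)) := by
      intro p
      refine Summable.of_norm_bounded
        (hgeo.mul_right (dTV (P1 p.1 p.2) (P2 p.1 p.2))) (fun t => ?_)
      rw [Real.norm_eq_abs, abs_of_nonneg (mul_nonneg (mul_nonneg (hpow t)
        (SimAux.dDist_nonneg P1 pol ρ0 t p)) (SimAux.dTV_nonneg _ _))]
      calc γ ^ t * dDist P1 pol ρ0 t p * dTV (P1 p.1 p.2) (P2 p.1 p.2)
          ≤ γ ^ t * 1 * dTV (P1 p.1 p.2) (P2 p.1 p.2) := by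
            refine mul_le_mul_of_nonneg_right ?_ (SimAux.dTV_nonneg _ _)
            exact mul_le_mul_of_nonneg_left (SimAux.dDist_le_one P1 pol ρ0 t p) (hpow t)
        _ = γ ^ t * dTV (P1 p.1 p.2) (P2 p.1 p.2) := by rw [mul_one]
    calc ∑ p : S × A, occ P1 pol ρ0 γ p * dTV (P1 p.1 p.2) (P2 p.1 p.2)
        = ∑ p : S × A, (1 - γ) * ∑' t : ℕ,
            γ ^ t * dDist P1 pol ρ0 t p * dTV (P1 p.1 p.2) (P2 p.1 p.2) := by
          refine Finset.sum_congr rfl fun p _ => ?_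
          rw [occ, mul_assoc, ← tsum_mul_right]
      _ = (1 - γ) * ∑ p : S × A, ∑' t : ℕ,
            γ ^ t * dDist P1 pol ρ0 t p * dTV (P1 p.1 p.2) (P2 p.1 p.2) := by
          rw [Finset.mul_sum]
      _ = (1 - γ) * ∑' t : ℕ, ∑ p : S × A,
            γ ^ t * dDist P1 pol ρ0 t p * dTV (P1 p.1 p.2) (P2 p.1 p.2) := by
          rw [Summable.tsum_finsetSum fun p _ => hsump p]
      _ = (1 - γ) * T := by
          rw [hTdef]
          congr 1
          refine tsum_congr fun t => ?_
          rw [hεdef, SimAux.eps, Finset.mul_sum]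
          exact Finset.sum_congr rfl fun p _ => by ring
  -- conclude
  rw [hRHS]
  refine hstep2.trans (le_of_eq ?_)
  rw [hS]
  field_simp
end
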